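/- arXiv:math/0011235 — 4 statements merged into one kernel-verified Lean document; each statement's English description precedes it below -/
import Mathlib

section
/- For every n ≥ 0, the number of monotone set partitions of [n] equals the number of non-overlapping set partitions of [n] (the n-th Bessel number B*_n). -/
/-- `P` is a set partition of `{1, …, n}` (realised as `Fin n`). -/
def IsSetPartition (n : ℕ) (P : Finset (Finset (Fin n))) : Prop :=
  (∀ A ∈ P, A.Nonempty) ∧
  (∀ A ∈ P, ∀ B ∈ P, A ≠ B → Disjoint A B) ∧
  (∀ x : Fin n, ∃ A ∈ P, x ∈ A)

/-- `P` is a monotone set partition: for any two distinct non-singleton blocks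
`A` and `B`, `min A < min B` if and only if `max A < max B`. -/
def IsMonotonePartition (n : ℕ) (P : Finset (Finset (Fin n))) : Prop :=
  IsSetPartition n P ∧
  ∀ A ∈ P, ∀ B ∈ P, A ≠ B → 2 ≤ A.card → 2 ≤ B.card →
    ∀ (hA : A.Nonempty) (hB : B.Nonempty),
      (A.min' hA < B.min' hB ↔ A.max' hA < B.max' hB)

/-- `P` is a non-overlapping set partition: there are no two blocks `A`, `B` with
`min A < min B < max A < max B`. -/
def IsNonOverlappingPartition (n : ℕ) (P : Finset (Finset (Fin n))) : Prop :=
  IsSetPartition n P ∧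
  ∀ A ∈ P, ∀ B ∈ P, ∀ (hA : A.Nonempty) (hB : B.Nonempty),
    ¬ (A.min' hA < B.min' hB ∧ B.min' hB < A.max' hA ∧ A.max' hA < B.max' hB)

/-!
Scan `0, 1, …, n - 1` from left to right. Just before `x`, each block met so far is either closed
or still open, and the open blocks are ranked by their least elements. The element `x` is a
singleton, opens a block, joins the open block of rank `k`, or closes an open block; recording
this turns a partition into a word over `single | opener | inner k | closer`. A partition is
monotone exactly when every closer closes the open block of least rank (first opened, first
closed), and non-overlapping exactly when it closes the one of largest rank (last opened, first
closed). For any such closing rule the scan can be replayed from the word, so the word determines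
the partition, and every word that never closes or joins a missing block and ends with no open
block arises. Both kinds of partitions are therefore counted by the same set of words.
-/

lemma IsSetPartition.eq_of_mem {n : ℕ} {P : Finset (Finset (Fin n))} {B C : Finset (Fin n)}
    {x : Fin n} (hP : IsSetPartition n P) (hB : B ∈ P) (hC : C ∈ P) (hxB : x ∈ B) (hxC : x ∈ C) :
    B = C := by
  by_contra h
  exact Finset.disjoint_left.1 (hP.2.1 B hB C hC h) hxB hxC

lemma IsSetPartition.ne_of_mem {n : ℕ} {P : Finset (Finset (Fin n))} {A B : Finset (Fin n)}
    (hP : IsSetPartition n P) (hA : A ∈ P) (hB : B ∈ P) (hAB : A ≠ B) {a b : Fin n} (ha : a ∈ A)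
    (hb : b ∈ B) : a ≠ b :=
  fun h => hAB (hP.eq_of_mem hA hB ha (h ▸ hb))

namespace PartitionScan

open Finset

section Rank

variable {α : Type*} [LinearOrder α]

def rank (S : Finset (Finset α)) (A : Finset α) : ℕ := #{C ∈ S | C.min < A.min}

/-- This is `∅` when no block of `S` has rank `k`. -/
def blockOfRank (S : Finset (Finset α)) (k : ℕ) : Finset α := {A ∈ S | rank S A = k}.sup id

variable {S : Finset (Finset α)} {A : Finset α} {k : ℕ}

lemma injOn_min_of_disjoint (hne : ∀ A ∈ S, A.Nonempty)
    (hdisj : ∀ A ∈ S, ∀ B ∈ S, A ≠ B → Disjoint A B) :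
    Set.InjOn Finset.min (S : Set (Finset α)) := by
  intro A hA B hB hAB
  by_contra hne'
  obtain ⟨a, ha⟩ := min_of_nonempty (hne A hA)
  exact disjoint_left.1 (hdisj A hA B hB hne') (mem_of_min ha) (mem_of_min (hAB ▸ ha))

lemma rank_lt_card (hA : A ∈ S) : rank S A < #S :=
  card_lt_card (filter_ssubset.2 ⟨A, hA, lt_irrefl _⟩)

lemma rank_lt_rank {C : Finset α} (hC : C ∈ S) (hCA : C.min < A.min) : rank S C < rank S A := by
  refine card_lt_card ((ssubset_iff_of_subset ?_).2 ⟨C, mem_filter.2 ⟨hC, hCA⟩, by simp⟩)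
  intro D hD
  simp only [mem_filter] at hD ⊢
  exact ⟨hD.1, hD.2.trans hCA⟩

lemma injOn_rank (h : Set.InjOn Finset.min (S : Set (Finset α))) :
    Set.InjOn (rank S) (S : Set (Finset α)) := by
  intro A hA C hC hAC
  rcases lt_trichotomy A.min C.min with hlt | heq | hgt
  · exact absurd hAC (rank_lt_rank hA hlt).ne
  · exact h hA hC heq
  · exact absurd hAC (rank_lt_rank hC hgt).ne'

lemma image_rank (h : Set.InjOn Finset.min (S : Set (Finset α))) : S.image (rank S) = range #S :=
  eq_of_subset_of_card_le (fun k hk => by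
      obtain ⟨A, hA, rfl⟩ := mem_image.1 hk
      exact mem_range.2 (rank_lt_card hA))
    (by rw [card_range, card_image_of_injOn (injOn_rank h)])

lemma blockOfRank_rank (h : Set.InjOn Finset.min (S : Set (Finset α))) (hA : A ∈ S) :
    blockOfRank S (rank S A) = A := by
  have : {C ∈ S | rank S C = rank S A} = {A} := by
    ext C
    simp only [mem_filter, mem_singleton]
    exact ⟨fun ⟨hC, hCA⟩ => injOn_rank h hC hA hCA, by rintro rfl; exact ⟨hA, rfl⟩⟩
  rw [blockOfRank, this, sup_singleton, id]

lemma exists_blockOfRank_eq (h : Set.InjOn Finset.min (S : Set (Finset α))) (hk : k < #S) :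
    ∃ A ∈ S, blockOfRank S k = A ∧ rank S A = k := by
  obtain ⟨A, hA, rfl⟩ := mem_image.1 ((image_rank h).symm ▸ mem_range.2 hk)
  exact ⟨A, hA, blockOfRank_rank h hA, rfl⟩

lemma rank_eq_zero_iff : rank S A = 0 ↔ ∀ C ∈ S, A.min ≤ C.min := by
  simp [rank, filter_eq_empty_iff]

lemma rank_eq_card_sub_one_iff (h : Set.InjOn Finset.min (S : Set (Finset α))) (hA : A ∈ S) :
    rank S A = #S - 1 ↔ ∀ C ∈ S, C.min ≤ A.min := by
  have hsub : {C ∈ S | C.min < A.min} ⊆ S.erase A := fun C hC => by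
    obtain ⟨hC, hlt⟩ := mem_filter.1 hC
    exact mem_erase.2 ⟨fun hCA => (hCA ▸ hlt).false, hC⟩
  rw [rank, ← card_erase_of_mem hA]
  constructor
  · intro hcard C hC
    by_cases hCA : C = A
    · exact hCA ▸ le_rfl
    · have := (eq_of_subset_of_card_le hsub hcard.ge).symm ▸ mem_erase.2 ⟨hCA, hC⟩
      exact (mem_filter.1 this).2.le
  · intro hle
    refine congrArg card (Subset.antisymm hsub fun C hC => ?_)
    obtain ⟨hCA, hC⟩ := mem_erase.1 hC
    exact mem_filter.2 ⟨hC, (hle C hC).lt_of_ne fun heq => hCA (h hC hA heq)⟩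

end Rank

variable {n : ℕ}

def trunc (i : ℕ) (B : Finset (Fin n)) : Finset (Fin n) := {y ∈ B | y.val < i}

def Straddles (i : ℕ) (B : Finset (Fin n)) : Prop := (∃ y ∈ B, y.val < i) ∧ ∃ y ∈ B, i ≤ y.val

instance (i : ℕ) : DecidablePred (Straddles (n := n) i) := fun B => by
  unfold Straddles; infer_instance

structure IsPartitionBelow (i : ℕ) (F : Finset (Finset (Fin n))) : Prop where
  nonempty : ∀ B ∈ F, B.Nonempty
  disjoint : ∀ A ∈ F, ∀ B ∈ F, A ≠ B → Disjoint A B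
  exists_mem_iff : ∀ y : Fin n, (∃ B ∈ F, y ∈ B) ↔ y.val < i

@[ext]
structure State (n : ℕ) where
  closedBlocks : Finset (Finset (Fin n))
  openBlocks : Finset (Finset (Fin n))

structure State.WellFormed (s : State n) (i : ℕ) : Prop where
  isPartitionBelow : IsPartitionBelow i (s.closedBlocks ∪ s.openBlocks)
  disjoint : Disjoint s.closedBlocks s.openBlocks

/-- The state of the scan of `P` just before `i`. -/
def trace (P : Finset (Finset (Fin n))) (i : ℕ) : State n where
  closedBlocks := {B ∈ P | ∀ y ∈ B, y.val < i}
  openBlocks := {B ∈ P | Straddles i B}.image (trunc i)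

variable {i : ℕ} {x y : Fin n} {A B C : Finset (Fin n)} {F P Q : Finset (Finset (Fin n))}

@[simp] lemma mem_trunc : y ∈ trunc i B ↔ y ∈ B ∧ y.val < i := mem_filter

lemma trunc_subset : trunc i B ⊆ B := filter_subset _ _

lemma trunc_eq_empty (h : ∀ y ∈ B, i ≤ y.val) : trunc i B = ∅ :=
  filter_false_of_mem fun y hy => not_lt.2 (h y hy)

lemma trunc_eq_self (h : ∀ y ∈ B, y.val < i) : trunc i B = B := filter_true_of_mem h

lemma trunc_succ (hx : x.val = i) (hxB : x ∈ B) : trunc (i + 1) B = insert x (trunc i B) := by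
  ext y
  simp only [mem_trunc, mem_insert]
  constructor
  · rintro ⟨hy, hlt⟩
    rcases eq_or_ne y x with rfl | hne
    · exact Or.inl rfl
    · exact Or.inr ⟨hy, by have := Fin.val_ne_of_ne hne; omega⟩
  · rintro (rfl | ⟨hy, hlt⟩) <;> [exact ⟨hxB, by omega⟩; exact ⟨hy, by omega⟩]

lemma trunc_insert_self (h : ∀ y ∈ B, y < x) : trunc x (insert x B) = B := by
  ext y
  simp only [mem_trunc, mem_insert]
  exact ⟨fun ⟨hy, hyx⟩ => hy.resolve_left fun h => hyx.ne (h ▸ rfl), fun hy => ⟨Or.inr hy, h y hy⟩⟩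

lemma trunc_succ_of_notMem (hx : x.val = i) (hxB : x ∉ B) : trunc (i + 1) B = trunc i B := by
  ext y
  simp only [mem_trunc]
  refine ⟨fun ⟨hy, hlt⟩ => ⟨hy, ?_⟩, fun ⟨hy, hlt⟩ => ⟨hy, by omega⟩⟩
  have : y.val ≠ i := fun h => hxB (Fin.ext (h.trans hx.symm) ▸ hy)
  omega

lemma trunc_trunc_of_le {j : ℕ} (hij : i ≤ j) : trunc i (trunc j B) = trunc i B := by
  ext y
  simp only [mem_trunc, and_assoc, and_congr_right_iff]
  intro _
  constructor <;> omega

lemma min_trunc (h : ∃ y ∈ B, y.val < i) : (trunc i B).min = B.min := by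
  obtain ⟨y, hy, hyi⟩ := h
  obtain ⟨m, hm⟩ := min_of_mem hy
  have hmi : m.val < i := lt_of_le_of_lt (Fin.le_def.1 (min_le_of_eq hy hm)) hyi
  exact le_antisymm (hm ▸ min_le (mem_trunc.2 ⟨mem_of_min hm, hmi⟩)) (min_mono trunc_subset)

lemma isSetPartition_iff_isPartitionBelow : IsSetPartition n F ↔ IsPartitionBelow n F :=
  ⟨fun ⟨hne, hdisj, hcov⟩ => ⟨hne, hdisj, fun y => iff_of_true (hcov y) y.isLt⟩,
    fun h => ⟨h.nonempty, h.disjoint, fun y => (h.exists_mem_iff y).2 y.isLt⟩⟩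

namespace IsPartitionBelow

lemma lt_of_mem (h : IsPartitionBelow i F) (hB : B ∈ F) (hy : y ∈ B) : y.val < i :=
  (h.exists_mem_iff y).1 ⟨B, hB, hy⟩

lemma notMem (h : IsPartitionBelow i F) (hx : x.val = i) (hB : B ∈ F) : x ∉ B :=
  fun hxB => (h.lt_of_mem hB hxB).ne hx

lemma insert_singleton (h : IsPartitionBelow i F) (hx : x.val = i) :
    IsPartitionBelow (i + 1) (insert {x} F) := by
  refine ⟨?_, ?_, fun y => ?_⟩
  · simpa using h.nonempty
  · simp only [mem_insert]
    rintro A (rfl | hA) C (rfl | hC) hAC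
    · exact absurd rfl hAC
    · exact disjoint_singleton_left.2 (h.notMem hx hC)
    · exact disjoint_singleton_right.2 (h.notMem hx hA)
    · exact h.disjoint A hA C hC hAC
  · simp only [mem_insert, exists_eq_or_imp, mem_singleton, h.exists_mem_iff]
    constructor
    · rintro (rfl | hy)
      · exact hx ▸ Nat.lt_succ_self _
      · omega
    · intro hy
      by_cases hyi : y.val < i
      · exact Or.inr hyi
      · exact Or.inl (Fin.ext (by omega))

lemma insert_erase (h : IsPartitionBelow i F) (hx : x.val = i) (hB : B ∈ F) :
    IsPartitionBelow (i + 1) (insert (insert x B) (F.erase B)) := by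
  have hdisjB : ∀ C ∈ F.erase B, Disjoint (insert x B) C := fun C hC => by
    obtain ⟨hCB, hC⟩ := mem_erase.1 hC
    exact disjoint_insert_left.2 ⟨h.notMem hx hC, h.disjoint B hB C hC hCB.symm⟩
  refine ⟨?_, ?_, fun y => ?_⟩
  · simp only [mem_insert]
    rintro C (rfl | hC)
    · exact insert_nonempty _ _
    · exact h.nonempty C (mem_of_mem_erase hC)
  · simp only [mem_insert]
    rintro A (rfl | hA) C (rfl | hC) hAC
    · exact absurd rfl hAC
    · exact hdisjB C hC
    · exact (hdisjB A hA).symm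
    · exact h.disjoint A (mem_of_mem_erase hA) C (mem_of_mem_erase hC) hAC
  · constructor
    · rintro ⟨C, hC, hyC⟩
      rcases mem_insert.1 hC with rfl | hC
      · rcases mem_insert.1 hyC with rfl | hy
        · omega
        · have := h.lt_of_mem hB hy; omega
      · have := h.lt_of_mem (mem_of_mem_erase hC) hyC; omega
    · intro hy
      rcases eq_or_ne y x with rfl | hyx
      · exact ⟨_, mem_insert_self _ _, mem_insert_self _ _⟩
      obtain ⟨C, hC, hyC⟩ := (h.exists_mem_iff y).2 (by have := Fin.val_ne_of_ne hyx; omega)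
      by_cases hCB : C = B
      · exact ⟨_, mem_insert_self _ _, mem_insert_of_mem (hCB ▸ hyC)⟩
      · exact ⟨C, mem_insert_of_mem (mem_erase.2 ⟨hCB, hC⟩), hyC⟩

end IsPartitionBelow

lemma mem_trace_closedBlocks : B ∈ (trace P i).closedBlocks ↔ B ∈ P ∧ ∀ y ∈ B, y.val < i :=
  mem_filter

lemma mem_trace_openBlocks :
    B ∈ (trace P i).openBlocks ↔ ∃ C ∈ P, Straddles i C ∧ trunc i C = B := by
  simp [trace, and_assoc]

lemma wellFormed_trace (hP : IsSetPartition n P) (i : ℕ) : (trace P i).WellFormed i := by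
  have htrunc : ∀ M ∈ (trace P i).closedBlocks ∪ (trace P i).openBlocks,
      ∃ C ∈ P, trunc i C = M ∧ ∃ y ∈ C, y.val < i := by
    intro M hM
    rcases mem_union.1 hM with hM | hM
    · obtain ⟨hMP, hlt⟩ := mem_trace_closedBlocks.1 hM
      obtain ⟨y, hy⟩ := hP.1 M hMP
      exact ⟨M, hMP, trunc_eq_self hlt, y, hy, hlt y hy⟩
    · obtain ⟨C, hC, hst, rfl⟩ := mem_trace_openBlocks.1 hM
      exact ⟨C, hC, rfl, hst.1⟩
  refine ⟨⟨fun M hM => ?_, fun A hA M hM hAM => ?_, fun y => ⟨?_, fun hy => ?_⟩⟩, ?_⟩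
  · obtain ⟨C, -, rfl, y, hy, hyi⟩ := htrunc M hM
    exact ⟨y, mem_trunc.2 ⟨hy, hyi⟩⟩
  · obtain ⟨C, hC, rfl, -⟩ := htrunc A hA
    obtain ⟨C', hC', rfl, -⟩ := htrunc M hM
    exact (hP.2.1 C hC C' hC' fun h => hAM (h ▸ rfl)).mono trunc_subset trunc_subset
  · rintro ⟨M, hM, hyM⟩
    obtain ⟨C, -, rfl, -⟩ := htrunc M hM
    exact (mem_trunc.1 hyM).2
  · obtain ⟨C, hC, hyC⟩ := hP.2.2 y
    by_cases hlt : ∀ z ∈ C, z.val < i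
    · exact ⟨C, mem_union_left _ (mem_trace_closedBlocks.2 ⟨hC, hlt⟩), hyC⟩
    · push Not at hlt
      refine ⟨trunc i C, mem_union_right _ ?_, mem_trunc.2 ⟨hyC, hy⟩⟩
      exact mem_trace_openBlocks.2 ⟨C, hC, ⟨⟨y, hyC, hy⟩, hlt⟩, rfl⟩
  · refine disjoint_left.2 fun D hDd hDo => ?_
    obtain ⟨hDP, hlt⟩ := mem_trace_closedBlocks.1 hDd
    obtain ⟨C, hC, ⟨-, z, hzC, hz⟩, rfl⟩ := mem_trace_openBlocks.1 hDo
    obtain ⟨y, hy⟩ := hP.1 _ hDP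
    have hCD : C = trunc i C := hP.eq_of_mem hC hDP (trunc_subset hy) hy
    exact absurd (hlt z (hCD ▸ hzC)) (not_lt.2 hz)

lemma trace_insert (B : Finset (Fin n)) (Q : Finset (Finset (Fin n))) (i : ℕ) :
    trace (insert B Q) i =
      ⟨if ∀ y ∈ B, y.val < i then insert B (trace Q i).closedBlocks
        else (trace Q i).closedBlocks,
        if Straddles i B then insert (trunc i B) (trace Q i).openBlocks
        else (trace Q i).openBlocks⟩ := by
  ext1
  · simp only [trace, filter_insert]
  · simp only [trace, filter_insert]
    split_ifs <;> simp [image_insert]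

lemma trace_succ_of_forall_notMem (hx : x.val = i) (hQ : ∀ C ∈ Q, x ∉ C) :
    trace Q (i + 1) = trace Q i := by
  have hne : ∀ C ∈ Q, ∀ y ∈ C, y.val ≠ i := fun C hC y hy h =>
    hQ C hC (Fin.ext (h.trans hx.symm) ▸ hy)
  have hst : ∀ C ∈ Q, Straddles (i + 1) C ↔ Straddles i C := fun C hC => by
    refine and_congr ⟨fun ⟨y, hy, h⟩ => ⟨y, hy, ?_⟩, fun ⟨y, hy, h⟩ => ⟨y, hy, by omega⟩⟩
      ⟨fun ⟨y, hy, h⟩ => ⟨y, hy, by omega⟩, fun ⟨y, hy, h⟩ => ⟨y, hy, ?_⟩⟩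
    · have := hne C hC y hy; omega
    · have := hne C hC y hy; omega
  ext1
  · refine filter_congr fun C hC => ⟨fun h y hy => ?_, fun h y hy => by have := h y hy; omega⟩
    have := h y hy; have := hne C hC y hy; omega
  · simp only [trace]
    rw [filter_congr hst]
    exact image_congr fun C hC => trunc_succ_of_notMem hx (hQ C (mem_filter.1 hC).1)

lemma trace_zero (hP : IsSetPartition n P) : trace P 0 = ⟨∅, ∅⟩ := by
  ext1
  · exact filter_false_of_mem fun B hB h => by
      obtain ⟨y, hy⟩ := hP.1 B hB
      exact absurd (h y hy) (Nat.not_lt_zero _)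
  · simp [trace, Straddles]

lemma trace_self (P : Finset (Finset (Fin n))) : trace P n = ⟨P, ∅⟩ := by
  ext1
  · exact filter_true_of_mem fun B _ y _ => y.isLt
  · simp only [trace, Straddles]
    simp

/-- The role of an element `x` in its block: a singleton, its least element, its greatest element,
or an element in between, the block being the open block of rank `k` just before `x`. For `Valid`
and `next` below, `j` is the number of open blocks. -/
inductive Step
  | single
  | opener
  | closer
  | inner (k : ℕ)

namespace Step

def Valid : Step → ℕ → Prop
  | closer, j => 0 < j
  | inner k, j => k < j
  | _, _ => True

def next : Step → ℕ → ℕ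
  | opener, j => j + 1
  | closer, j => j - 1
  | _, j => j

def apply (r : ℕ → ℕ) (x : Fin n) : Step → State n → State n
  | single, s => ⟨insert {x} s.closedBlocks, s.openBlocks⟩
  | opener, s => ⟨s.closedBlocks, insert {x} s.openBlocks⟩
  | closer, s =>
    let B := blockOfRank s.openBlocks (r #s.openBlocks)
    ⟨insert (insert x B) s.closedBlocks, s.openBlocks.erase B⟩
  | inner k, s =>
    let B := blockOfRank s.openBlocks k
    ⟨s.closedBlocks, insert (insert x B) (s.openBlocks.erase B)⟩

end Step

variable {r : ℕ → ℕ} {s : State n} {st : Step} {w : Fin n → Step}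

namespace State.WellFormed

lemma injOn_min (hs : s.WellFormed i) :
    Set.InjOn Finset.min (s.openBlocks : Set (Finset (Fin n))) :=
  injOn_min_of_disjoint (fun B hB => hs.1.nonempty B (mem_union_right _ hB))
    fun A hA B hB => hs.1.disjoint A (mem_union_right _ hA) B (mem_union_right _ hB)

lemma extend (hs : s.WellFormed i) (hx : x.val = i) {B : Finset (Fin n)} (hB : B ∈ s.openBlocks) :
    State.WellFormed ⟨s.closedBlocks, insert (insert x B) (s.openBlocks.erase B)⟩ (i + 1) ∧
      State.WellFormed ⟨insert (insert x B) s.closedBlocks, s.openBlocks.erase B⟩ (i + 1) := by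
  have hBd : B ∉ s.closedBlocks := disjoint_right.1 hs.disjoint hB
  have hnew : ∀ D ∈ s.closedBlocks ∪ s.openBlocks, insert x B ≠ D := fun D hD h =>
    hs.1.notMem hx hD (h ▸ mem_insert_self x B)
  have hunion := hs.1.insert_erase hx (mem_union_right _ hB)
  rw [erase_union_distrib, erase_eq_of_notMem hBd] at hunion
  refine ⟨⟨by rwa [union_insert], ?_⟩, ⟨by rwa [insert_union], ?_⟩⟩
  · refine disjoint_insert_right.2 ⟨fun h => hnew _ (mem_union_left _ h) rfl, ?_⟩
    exact hs.disjoint.mono_right (erase_subset _ _)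
  · refine disjoint_insert_left.2 ⟨fun h => hnew _ (mem_union_right _ (mem_of_mem_erase h)) rfl, ?_⟩
    exact hs.disjoint.mono_right (erase_subset _ _)

lemma apply (hs : s.WellFormed i) (hx : x.val = i) (hr : ∀ j, 0 < j → r j < j)
    (hv : st.Valid #s.openBlocks) :
    (st.apply r x s).WellFormed (i + 1) ∧ #(st.apply r x s).openBlocks = st.next #s.openBlocks := by
  have hsing : ({x} : Finset (Fin n)) ∉ s.closedBlocks ∪ s.openBlocks := fun h =>
    hs.1.notMem hx h (mem_singleton_self x)
  cases st with
  | single =>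
    refine ⟨⟨by simpa [Step.apply, insert_union] using hs.1.insert_singleton hx, ?_⟩, rfl⟩
    exact disjoint_insert_left.2 ⟨fun h => hsing (mem_union_right _ h), hs.disjoint⟩
  | opener =>
    refine ⟨⟨by simpa [Step.apply, union_insert] using hs.1.insert_singleton hx, ?_⟩, ?_⟩
    · exact disjoint_insert_right.2 ⟨fun h => hsing (mem_union_left _ h), hs.disjoint⟩
    · exact card_insert_of_notMem fun h => hsing (mem_union_right _ h)
  | closer =>
    obtain ⟨B, hB, hBk, -⟩ := exists_blockOfRank_eq hs.injOn_min (hr _ hv)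
    simp only [Step.apply, hBk]
    exact ⟨(hs.extend hx hB).2, card_erase_of_mem hB⟩
  | inner k =>
    obtain ⟨B, hB, hBk, -⟩ := exists_blockOfRank_eq hs.injOn_min hv
    simp only [Step.apply, hBk]
    refine ⟨(hs.extend hx hB).1, ?_⟩
    rw [card_insert_of_notMem fun h => hs.1.notMem hx (mem_union_right _ (mem_of_mem_erase h))
      (mem_insert_self x B), card_erase_of_mem hB]
    exact Nat.sub_add_cancel (card_pos.2 ⟨B, hB⟩)

end State.WellFormed

def blockOf (P : Finset (Finset (Fin n))) (x : Fin n) : Finset (Fin n) := {C ∈ P | x ∈ C}.sup id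

lemma blockOf_eq (hP : IsSetPartition n P) (hB : B ∈ P) (hx : x ∈ B) : blockOf P x = B := by
  have : {C ∈ P | x ∈ C} = {B} := by
    ext C
    simp only [mem_filter, mem_singleton]
    exact ⟨fun ⟨hC, hxC⟩ => hP.eq_of_mem hC hB hxC hx, by rintro rfl; exact ⟨hB, hx⟩⟩
  rw [blockOf, this, sup_singleton, id]

def stepOf (P : Finset (Finset (Fin n))) (x : Fin n) : Step :=
  let B := blockOf P x
  if B = {x} then .single
  else if ∀ y ∈ B, x ≤ y then .opener
  else if ∀ y ∈ B, y ≤ x then .closer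
  else .inner (rank (trace P x).openBlocks (trunc x B))

/-- At the greatest element `x` of each non-singleton block `B`, the part of `B` below `x` is the
open block of rank `r j`, where `j` is the number of blocks open at `x`. -/
def ClosesAtRank (r : ℕ → ℕ) (P : Finset (Finset (Fin n))) : Prop :=
  ∀ B ∈ P, ∀ x ∈ B, B ≠ {x} → (∀ y ∈ B, y ≤ x) →
    rank (trace P x).openBlocks (trunc x B) = r #(trace P x).openBlocks

lemma stepOf_of_mem (hP : IsSetPartition n P) (hB : B ∈ P) (hx : x ∈ B) :
    stepOf P x =
      if B = {x} then .single
      else if ∀ y ∈ B, x ≤ y then .opener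
      else if ∀ y ∈ B, y ≤ x then .closer
      else .inner (rank (trace P x).openBlocks (trunc x B)) := by
  rw [stepOf, blockOf_eq hP hB hx]

lemma trace_and_trace_succ_of_mem (hP : IsSetPartition n P) (hB : B ∈ P) (hxB : x ∈ B) :
    trace P x = ⟨(trace (P.erase B) x).closedBlocks,
      if ∃ y ∈ B, y < x then insert (trunc x B) (trace (P.erase B) x).openBlocks
      else (trace (P.erase B) x).openBlocks⟩ ∧
    trace P (x + 1) = ⟨if ∀ y ∈ B, y ≤ x then insert B (trace (P.erase B) x).closedBlocks
      else (trace (P.erase B) x).closedBlocks,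
      if ∃ y ∈ B, x < y then insert (trunc (x + 1) B) (trace (P.erase B) x).openBlocks
      else (trace (P.erase B) x).openBlocks⟩ := by
  have hQ : ∀ C ∈ P.erase B, x ∉ C := fun C hC hxC =>
    ne_of_mem_erase hC (hP.eq_of_mem (mem_of_mem_erase hC) hB hxC hxB)
  have hst : Straddles x B ↔ ∃ y ∈ B, y < x :=
    ⟨fun h => h.1, fun h => ⟨h, x, hxB, le_rfl⟩⟩
  have hst' : Straddles (x + 1) B ↔ ∃ y ∈ B, x < y :=
    ⟨fun ⟨_, y, hy, h⟩ => ⟨y, hy, h⟩, fun ⟨y, hy, h⟩ => ⟨⟨x, hxB, Nat.lt_succ_self _⟩, y, hy, h⟩⟩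
  have hlt : ¬ ∀ y ∈ B, y.val < x := fun h => lt_irrefl _ (h x hxB)
  have hlt' : (∀ y ∈ B, y.val < x + 1) ↔ ∀ y ∈ B, y ≤ x := by
    simp only [Nat.lt_succ_iff, Fin.le_def]
  have hP : ∀ j, trace P j = trace (insert B (P.erase B)) j := fun j => by rw [insert_erase hB]
  rw [hP, hP, trace_insert, trace_insert, trace_succ_of_forall_notMem rfl hQ]
  simp only [hst, hst', hlt, hlt', if_false, and_self]

lemma trunc_mem_trace_openBlocks (hB : B ∈ P) (hxB : x ∈ B) (h : ∃ y ∈ B, y < x) :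
    trunc x B ∈ (trace P x).openBlocks :=
  mem_trace_openBlocks.2 ⟨B, hB, ⟨h, x, hxB, le_rfl⟩, rfl⟩

lemma exists_ne_of_ne_singleton (hxB : x ∈ B) (hB : B ≠ {x}) : ∃ y ∈ B, y ≠ x := by
  by_contra! h
  exact hB (eq_singleton_iff_unique_mem.2 ⟨hxB, h⟩)

lemma valid_stepOf (hP : IsSetPartition n P) (x : Fin n) :
    (stepOf P x).Valid #(trace P x).openBlocks := by
  obtain ⟨B, hB, hxB⟩ := hP.2.2 x
  rw [stepOf_of_mem hP hB hxB]
  split_ifs with hsing hmin hmax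
  · trivial
  · trivial
  all_goals
    push Not at hmin
    have hopen := trunc_mem_trace_openBlocks hB hxB hmin
  · exact card_pos.2 ⟨_, hopen⟩
  · exact rank_lt_card hopen

lemma trunc_notMem_trace_erase (hP : IsSetPartition n P) (hB : B ∈ P) :
    trunc i B ∉ (trace (P.erase B) i).openBlocks := fun h => by
  obtain ⟨C, hC, ⟨⟨y, hyC, hy⟩, -⟩, hCB⟩ := mem_trace_openBlocks.1 h
  exact ne_of_mem_erase hC
    (hP.eq_of_mem (mem_of_mem_erase hC) hB hyC (trunc_subset (hCB ▸ mem_trunc.2 ⟨hyC, hy⟩)))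

theorem apply_stepOf_trace (hP : IsSetPartition n P) (hcl : ClosesAtRank r P) (x : Fin n) :
    (stepOf P x).apply r x (trace P x) = trace P (x + 1) := by
  obtain ⟨B, hB, hxB⟩ := hP.2.2 x
  obtain ⟨hx, hx1⟩ := trace_and_trace_succ_of_mem hP hB hxB
  have hBQ := trunc_notMem_trace_erase hP hB (i := x)
  have hblock : (∃ y ∈ B, y < x) →
      blockOfRank (trace P x).openBlocks (rank (trace P x).openBlocks (trunc x B)) = trunc x B :=
    fun h => blockOfRank_rank (wellFormed_trace hP x).injOn_min
      (trunc_mem_trace_openBlocks hB hxB h)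
  rw [stepOf_of_mem hP hB hxB]
  split_ifs with hsing hmin hmax
  · subst hsing
    rw [hx1, hx]
    simp [Step.apply]
  · have hlt : ¬ ∃ y ∈ B, y < x := fun ⟨y, hy, h⟩ => (hmin y hy).not_gt h
    obtain ⟨z, hz, hzx⟩ := exists_ne_of_ne_singleton hxB hsing
    have hgt : ∃ y ∈ B, x < y := ⟨z, hz, (hmin z hz).lt_of_ne hzx.symm⟩
    have hle : ¬ ∀ y ∈ B, y ≤ x := fun h => hzx (le_antisymm (h z hz) (hmin z hz))
    have htr : trunc (x + 1) B = {x} := by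
      rw [trunc_succ rfl hxB, trunc_eq_empty hmin]; rfl
    rw [hx1, hx]
    simp only [Step.apply, hlt, hgt, hle, htr, if_true, if_false]
  all_goals
    have hlt : ∃ y ∈ B, y < x := by push Not at hmin; exact hmin
  · have hgt : ¬ ∃ y ∈ B, x < y := fun ⟨y, hy, h⟩ => (hmax y hy).not_gt h
    have hins : insert x (trunc x B) = B := by
      rw [← trunc_succ rfl hxB, trunc_eq_self fun y hy => Nat.lt_succ_of_le (hmax y hy)]
    simp only [Step.apply, ← hcl B hB x hxB hsing hmax, hblock hlt, hins]
    rw [hx1, hx]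
    simp only [hlt, hgt, if_pos hmax, if_true, if_false, erase_insert hBQ]
  · have hgt : ∃ y ∈ B, x < y := by push Not at hmax; exact hmax
    simp only [Step.apply, hblock hlt]
    rw [hx1, hx]
    simp only [hlt, hgt, if_neg hmax, if_true, erase_insert hBQ, trunc_succ rfl hxB]

lemma lt_of_mem_trace_openBlocks (hB : B ∈ (trace P x).openBlocks) (hy : y ∈ B) : y < x := by
  obtain ⟨C, -, -, rfl⟩ := mem_trace_openBlocks.1 hB
  exact (mem_trunc.1 hy).2

lemma stepOf_eq_single (hP : IsSetPartition n P) (hx : {x} ∈ P) : stepOf P x = .single := by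
  rw [stepOf_of_mem hP hx (mem_singleton_self x), if_pos rfl]

lemma stepOf_eq_opener (hP : IsSetPartition n P) (hx : {x} ∈ (trace P (x + 1)).openBlocks) :
    stepOf P x = .opener := by
  obtain ⟨C, hC, ⟨-, z, hzC, hz⟩, hCx⟩ := mem_trace_openBlocks.1 hx
  have hmem : ∀ y ∈ C, y.val < x + 1 → y = x := fun y hy hyx =>
    mem_singleton.1 (hCx ▸ mem_trunc.2 ⟨hy, hyx⟩)
  have hne : C ≠ {x} := fun hC => by
    rw [hC, mem_singleton] at hzC
    exact absurd hz (hzC ▸ Nat.not_succ_le_self _)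
  have hmin : ∀ y ∈ C, x ≤ y := fun y hy => by
    by_contra hlt
    exact hlt (hmem y hy (by rw [Fin.le_def] at hlt; omega)).ge
  rw [stepOf_of_mem hP hC (trunc_subset (hCx ▸ mem_singleton_self x)), if_neg hne, if_pos hmin]

lemma stepOf_eq_closer (hP : IsSetPartition n P) (hB : B ∈ (trace P x).openBlocks)
    (hx : insert x B ∈ (trace P (x + 1)).closedBlocks) : stepOf P x = .closer := by
  obtain ⟨hxB, hle⟩ := mem_trace_closedBlocks.1 hx
  obtain ⟨C, -, ⟨⟨y, hyC, hy⟩, -⟩, rfl⟩ := mem_trace_openBlocks.1 hB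
  have hyB : y ∈ insert x (trunc x C) := mem_insert_of_mem (mem_trunc.2 ⟨hyC, hy⟩)
  rw [stepOf_of_mem hP hxB (mem_insert_self _ _),
    if_neg fun (h : insert x (trunc x C) = {x}) =>
      hy.ne (Fin.val_eq_of_eq (eq_of_mem_singleton (h ▸ hyB))),
    if_neg fun h => (h y hyB).not_gt hy,
    if_pos fun z hz => Fin.le_def.2 (Nat.lt_succ_iff.1 (hle z hz))]

lemma stepOf_eq_inner (hP : IsSetPartition n P) (hB : B ∈ (trace P x).openBlocks)
    (hx : insert x B ∈ (trace P (x + 1)).openBlocks) :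
    stepOf P x = .inner (rank (trace P x).openBlocks B) := by
  obtain ⟨C, hC, ⟨-, z, hzC, hz⟩, hCB⟩ := mem_trace_openBlocks.1 hx
  obtain ⟨y, hy⟩ := (wellFormed_trace hP x).1.nonempty B (mem_union_right _ hB)
  have hBlt : ∀ y ∈ B, y < x := fun y hy => lt_of_mem_trace_openBlocks hB hy
  have hyC : y ∈ C := trunc_subset (hCB ▸ mem_insert_of_mem hy)
  have htrunc : trunc x C = B := by
    rw [← trunc_trunc_of_le (Nat.le_succ _), hCB, trunc_insert_self hBlt]
  rw [stepOf_of_mem hP hC (trunc_subset (hCB ▸ mem_insert_self x B)),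
    if_neg fun (h : C = {x}) => (hBlt y hy).ne (mem_singleton.1 (h ▸ hyC)),
    if_neg fun h => (h y hyC).not_gt (hBlt y hy),
    if_neg fun h => (h z hzC).not_gt (by rw [Fin.lt_def]; omega), htrunc]

theorem stepOf_eq_of_apply (hP : IsSetPartition n P) (hr : ∀ j, 0 < j → r j < j)
    (hv : st.Valid #(trace P x).openBlocks) (h : st.apply r x (trace P x) = trace P (x + 1)) :
    stepOf P x = st := by
  have hinj := (wellFormed_trace hP x).injOn_min
  cases st with
  | single =>
    have hx : {x} ∈ (trace P (x + 1)).closedBlocks := by rw [← h]; exact mem_insert_self _ _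
    exact stepOf_eq_single hP (mem_trace_closedBlocks.1 hx).1
  | opener => exact stepOf_eq_opener hP (by rw [← h]; exact mem_insert_self _ _)
  | closer =>
    obtain ⟨B, hB, hBk, -⟩ := exists_blockOfRank_eq hinj (hr _ hv)
    refine stepOf_eq_closer hP hB ?_
    rw [← h]; simp only [Step.apply, hBk]; exact mem_insert_self _ _
  | inner k =>
    obtain ⟨B, hB, hBk, rfl⟩ := exists_blockOfRank_eq hinj hv
    refine stepOf_eq_inner hP hB ?_
    rw [← h]; simp only [Step.apply, hBk]; exact mem_insert_self _ _

theorem closesAtRank_of_apply (hP : IsSetPartition n P) (hr : ∀ j, 0 < j → r j < j)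
    (h : ∀ x, (stepOf P x).apply r x (trace P x) = trace P (x + 1)) : ClosesAtRank r P := by
  intro B hB x hxB hsing hmax
  have hmin : ¬ ∀ y ∈ B, x ≤ y := fun hmin =>
    hsing (eq_singleton_iff_unique_mem.2 ⟨hxB, fun y hy => le_antisymm (hmax y hy) (hmin y hy)⟩)
  have hstep := h x
  rw [stepOf_of_mem hP hB hxB, if_neg hsing, if_neg hmin, if_pos hmax] at hstep
  have hopen := trunc_mem_trace_openBlocks hB hxB (by push Not at hmin; exact hmin)
  obtain ⟨B', hB', hBk, hrank⟩ :=
    exists_blockOfRank_eq (wellFormed_trace hP x).injOn_min (hr _ (card_pos.2 ⟨_, hopen⟩))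
  have hx : insert x B' ∈ (trace P (x + 1)).closedBlocks := by
    rw [← hstep]; simp only [Step.apply, hBk]; exact mem_insert_self _ _
  rw [← hP.eq_of_mem (mem_trace_closedBlocks.1 hx).1 hB (mem_insert_self x B') hxB,
    trunc_insert_self fun y hy => lt_of_mem_trace_openBlocks hB' hy, hrank]

def State.ExtendsTo (s : State n) (i : ℕ) (P : Finset (Finset (Fin n))) : Prop :=
  s.closedBlocks ⊆ P ∧ ∀ O ∈ s.openBlocks, ∃ C ∈ P, trunc i C = O ∧ ∃ y ∈ C, i ≤ y.val

namespace State.ExtendsTo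

theorem eq_trace (hP : IsSetPartition n P) (hs : s.WellFormed i) (h : s.ExtendsTo i P) :
    s = trace P i := by
  obtain ⟨hd, ho⟩ := h
  have hcov : ∀ C ∈ P, ∀ y ∈ C, y.val < i →
      C ∈ s.closedBlocks ∨ trunc i C ∈ s.openBlocks ∧ ∃ z ∈ C, i ≤ z.val := by
    intro C hC y hyC hy
    obtain ⟨M, hM, hyM⟩ := (hs.1.exists_mem_iff y).2 hy
    rcases mem_union.1 hM with hM | hM
    · exact Or.inl (hP.eq_of_mem (hd hM) hC hyM hyC ▸ hM)
    · obtain ⟨C', hC', rfl, hz⟩ := ho M hM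
      exact Or.inr (hP.eq_of_mem hC' hC (trunc_subset hyM) hyC ▸ ⟨hM, hz⟩)
  have hlt : ∀ D ∈ s.closedBlocks, ∀ y ∈ D, y.val < i := fun D hD y hy =>
    hs.1.lt_of_mem (mem_union_left _ hD) hy
  ext1
  · ext D
    refine ⟨fun hD => mem_trace_closedBlocks.2 ⟨hd hD, hlt D hD⟩, fun hD => ?_⟩
    obtain ⟨hDP, hDlt⟩ := mem_trace_closedBlocks.1 hD
    obtain ⟨y, hy⟩ := hP.1 D hDP
    refine (hcov D hDP y hy (hDlt y hy)).resolve_right fun ⟨_, z, hz, hzi⟩ => ?_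
    exact (hDlt z hz).not_ge hzi
  · ext O
    refine ⟨fun hO => ?_, fun hO => ?_⟩
    · obtain ⟨C, hC, rfl, hz⟩ := ho O hO
      obtain ⟨y, hy⟩ := hs.1.nonempty _ (mem_union_right _ hO)
      exact mem_trace_openBlocks.2 ⟨C, hC, ⟨⟨y, mem_trunc.1 hy⟩, hz⟩, rfl⟩
    · obtain ⟨C, hC, ⟨⟨y, hyC, hy⟩, z, hzC, hz⟩, rfl⟩ := mem_trace_openBlocks.1 hO
      refine ((hcov C hC y hyC hy).resolve_left fun hCd => ?_).1
      exact (hlt C hCd z hzC).not_ge hz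

theorem of_apply (hs : s.WellFormed i) (hx : x.val = i) (h : (st.apply r x s).ExtendsTo (i + 1) P) :
    s.ExtendsTo i P := by
  subst hx
  obtain ⟨hd, ho⟩ := h
  have hlt : ∀ O ∈ s.openBlocks, ∀ y ∈ O, y < x := fun O hO y hy =>
    hs.1.lt_of_mem (mem_union_right _ hO) hy
  have hkeep : ∀ O ∈ s.openBlocks, O ∈ (st.apply r x s).openBlocks →
      ∃ C ∈ P, trunc x C = O ∧ ∃ y ∈ C, x.val ≤ y.val := fun O hO hO' => by
    obtain ⟨C, hC, hCO, y, hy, hyi⟩ := ho O hO'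
    refine ⟨C, hC, ?_, y, hy, by omega⟩
    rw [← trunc_trunc_of_le (Nat.le_succ _), hCO, trunc_eq_self (hlt O hO)]
  have hgrow : ∀ B ∈ s.openBlocks, insert x B ∈ P →
      ∃ C ∈ P, trunc x C = B ∧ ∃ y ∈ C, x.val ≤ y.val := fun B hB hxB =>
    ⟨_, hxB, trunc_insert_self (hlt B hB), x, mem_insert_self x B, le_rfl⟩
  cases st with
  | single => exact ⟨(subset_insert _ _).trans hd, fun O hO => hkeep O hO hO⟩
  | opener => exact ⟨hd, fun O hO => hkeep O hO (mem_insert_of_mem hO)⟩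
  | closer =>
    refine ⟨(subset_insert _ _).trans hd, fun O hO => ?_⟩
    by_cases hOB : O = blockOfRank s.openBlocks (r #s.openBlocks)
    · exact hgrow O hO (hd (mem_insert.2 (Or.inl (hOB ▸ rfl))))
    · exact hkeep O hO (mem_erase.2 ⟨hOB, hO⟩)
  | inner k =>
    refine ⟨hd, fun O hO => ?_⟩
    by_cases hOB : O = blockOfRank s.openBlocks k
    · obtain ⟨C, hC, hCO, -⟩ := ho (insert x O) (by rw [hOB]; exact mem_insert_self _ _)
      refine ⟨C, hC, ?_, x, trunc_subset (hCO ▸ mem_insert_self x O), le_rfl⟩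
      rw [← trunc_trunc_of_le (Nat.le_succ _), hCO, trunc_insert_self (hlt O hO)]
    · exact hkeep O hO (mem_insert_of_mem (mem_erase.2 ⟨hOB, hO⟩))

end State.ExtendsTo

def openCount (w : Fin n → Step) : ℕ → ℕ
  | 0 => 0
  | i + 1 => if h : i < n then (w ⟨i, h⟩).next (openCount w i) else openCount w i

def IsValidWord (w : Fin n → Step) : Prop :=
  (∀ x, (w x).Valid (openCount w x)) ∧ openCount w n = 0

def stateAt (r : ℕ → ℕ) (w : Fin n → Step) : ℕ → State n
  | 0 => ⟨∅, ∅⟩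
  | i + 1 => if h : i < n then (w ⟨i, h⟩).apply r ⟨i, h⟩ (stateAt r w i) else stateAt r w i

def decode (r : ℕ → ℕ) (w : Fin n → Step) : Finset (Finset (Fin n)) := (stateAt r w n).closedBlocks

lemma openCount_succ (x : Fin n) : openCount w (x + 1) = (w x).next (openCount w x) := by
  simp [openCount]

lemma stateAt_succ (x : Fin n) : stateAt r w (x + 1) = (w x).apply r x (stateAt r w x) := by
  simp [stateAt]

section Encode

variable (hP : IsSetPartition n P) (hcl : ClosesAtRank r P)
include hP hcl

lemma stateAt_stepOf {i : ℕ} (hi : i ≤ n) : stateAt r (stepOf P) i = trace P i := by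
  induction i with
  | zero => exact (trace_zero hP).symm
  | succ i ih =>
    rw [← apply_stepOf_trace hP hcl ⟨i, hi⟩, ← ih (Nat.le_of_succ_le hi)]
    exact stateAt_succ ⟨i, hi⟩

lemma openCount_stepOf (hr : ∀ j, 0 < j → r j < j) {i : ℕ} (hi : i ≤ n) :
    openCount (stepOf P) i = #(trace P i).openBlocks := by
  induction i with
  | zero => simp [openCount, trace_zero hP]
  | succ i ih =>
    let x : Fin n := ⟨i, hi⟩
    rw [openCount_succ x, ih (Nat.le_of_succ_le hi), ← apply_stepOf_trace hP hcl x]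
    exact ((wellFormed_trace hP x).apply rfl hr (valid_stepOf hP x)).2.symm

lemma isValidWord_stepOf (hr : ∀ j, 0 < j → r j < j) : IsValidWord (stepOf P) :=
  ⟨fun x => openCount_stepOf hP hcl hr x.isLt.le ▸ valid_stepOf hP x, by
    rw [openCount_stepOf hP hcl hr le_rfl, trace_self]; rfl⟩

lemma decode_stepOf : decode r (stepOf P) = P := by
  rw [decode, stateAt_stepOf hP hcl le_rfl, trace_self]

end Encode

section Decode

variable (hw : IsValidWord w) (hr : ∀ j, 0 < j → r j < j)
include hw hr

lemma wellFormed_stateAt {i : ℕ} (hi : i ≤ n) :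
    (stateAt r w i).WellFormed i ∧ #(stateAt r w i).openBlocks = openCount w i := by
  induction i with
  | zero => exact ⟨⟨⟨by simp [stateAt], by simp [stateAt], by simp [stateAt]⟩, by simp [stateAt]⟩,
    rfl⟩
  | succ i ih =>
    let x : Fin n := ⟨i, hi⟩
    obtain ⟨hwf, hcard⟩ := ih (Nat.le_of_succ_le hi)
    rw [stateAt_succ x, openCount_succ x, ← hcard]
    exact hwf.apply rfl hr (hcard ▸ hw.1 x)

lemma openBlocks_stateAt_self : (stateAt r w n).openBlocks = ∅ :=
  card_eq_zero.1 ((wellFormed_stateAt hw hr le_rfl).2.trans hw.2)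

lemma isSetPartition_decode : IsSetPartition n (decode r w) := by
  have := (wellFormed_stateAt hw hr le_rfl).1.1
  rwa [openBlocks_stateAt_self hw hr, union_empty, ← isSetPartition_iff_isPartitionBelow] at this

lemma stateAt_eq_trace {i : ℕ} (hi : i ≤ n) : stateAt r w i = trace (decode r w) i := by
  refine State.ExtendsTo.eq_trace (isSetPartition_decode hw hr) (wellFormed_stateAt hw hr hi).1 ?_
  induction hi using Nat.decreasingInduction with
  | self => exact ⟨subset_rfl, by simp [openBlocks_stateAt_self hw hr]⟩
  | of_succ i hi ih =>
    refine State.ExtendsTo.of_apply (wellFormed_stateAt hw hr hi.le).1 (x := ⟨i, hi⟩)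
      (st := w ⟨i, hi⟩) (r := r) rfl ?_
    rw [← stateAt_succ]
    exact ih

lemma apply_trace_decode (x : Fin n) :
    (w x).apply r x (trace (decode r w) x) = trace (decode r w) (x + 1) := by
  rw [← stateAt_eq_trace hw hr x.isLt.le, ← stateAt_eq_trace hw hr x.isLt, stateAt_succ]

lemma stepOf_decode : stepOf (decode r w) = w := by
  funext x
  refine stepOf_eq_of_apply (isSetPartition_decode hw hr) hr ?_ (apply_trace_decode hw hr x)
  rw [← stateAt_eq_trace hw hr x.isLt.le, (wellFormed_stateAt hw hr x.isLt.le).2]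
  exact hw.1 x

lemma closesAtRank_decode : ClosesAtRank r (decode r w) :=
  closesAtRank_of_apply (isSetPartition_decode hw hr) hr fun x => by
    rw [stepOf_decode hw hr]
    exact apply_trace_decode hw hr x

end Decode

theorem ncard_closesAtRank (hr : ∀ j, 0 < j → r j < j) :
    {P : Finset (Finset (Fin n)) | IsSetPartition n P ∧ ClosesAtRank r P}.ncard =
      {w : Fin n → Step | IsValidWord w}.ncard := by
  refine Set.BijOn.ncard_eq (f := stepOf) ⟨fun P hP => isValidWord_stepOf hP.1 hP.2 hr, ?_, ?_⟩
  · intro P hP Q hQ h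
    rw [← decode_stepOf hP.1 hP.2, h, decode_stepOf hQ.1 hQ.2]
  · exact fun w hw => ⟨decode r w, ⟨isSetPartition_decode hw hr, closesAtRank_decode hw hr⟩,
      stepOf_decode hw hr⟩

lemma forall_mem_trace_openBlocks {i : ℕ} {p : WithTop (Fin n) → Prop} :
    (∀ O ∈ (trace P i).openBlocks, p O.min) ↔ ∀ C ∈ P, Straddles i C → p C.min := by
  simp only [mem_trace_openBlocks]
  refine ⟨fun h C hC hst => ?_, ?_⟩
  · simpa only [min_trunc hst.1] using h _ ⟨C, hC, hst, rfl⟩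
  · rintro h _ ⟨C, hC, hst, rfl⟩
    simpa only [min_trunc hst.1] using h C hC hst

lemma rank_trunc_eq_zero_iff (h : ∃ y ∈ B, y < x) :
    rank (trace P x).openBlocks (trunc x B) = 0 ↔ ∀ C ∈ P, Straddles x C → B.min ≤ C.min := by
  rw [rank_eq_zero_iff, min_trunc h, forall_mem_trace_openBlocks]

lemma rank_trunc_eq_card_sub_one_iff (hP : IsSetPartition n P) (hB : B ∈ P) (hxB : x ∈ B)
    (h : ∃ y ∈ B, y < x) :
    rank (trace P x).openBlocks (trunc x B) = #(trace P x).openBlocks - 1 ↔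
      ∀ C ∈ P, Straddles x C → C.min ≤ B.min := by
  rw [rank_eq_card_sub_one_iff (wellFormed_trace hP x).injOn_min
    (trunc_mem_trace_openBlocks hB hxB h), min_trunc h]
  exact forall_mem_trace_openBlocks (p := (· ≤ B.min))

lemma min_le_min_iff (hB : B.Nonempty) (hC : C.Nonempty) :
    B.min ≤ C.min ↔ B.min' hB ≤ C.min' hC := by
  rw [← coe_min' hB, ← coe_min' hC, WithTop.coe_le_coe]

lemma exists_lt_of_ne_singleton (hxB : x ∈ B) (hsing : B ≠ {x}) (hmax : ∀ y ∈ B, y ≤ x) :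
    ∃ y ∈ B, y < x := by
  obtain ⟨y, hy, hyx⟩ := exists_ne_of_ne_singleton hxB hsing
  exact ⟨y, hy, (hmax y hy).lt_of_ne hyx⟩

lemma min'_lt_min'_of_max'_lt (hP : IsSetPartition n P) (hcl : ClosesAtRank (fun _ => 0) P)
    (hA : A ∈ P) (hB : B ∈ P) (hAB : A ≠ B) (hA2 : 2 ≤ #A) (hA' : A.Nonempty) (hB' : B.Nonempty)
    (hlt : A.max' hA' < B.max' hB') : A.min' hA' < B.min' hB' := by
  set x := A.max' hA'
  have hxA : x ∈ A := max'_mem A hA'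
  have hmax : ∀ y ∈ A, y ≤ x := fun y hy => le_max' A y hy
  have hsing : A ≠ {x} := fun h => by rw [h, card_singleton] at hA2; omega
  by_cases hBx : B.min' hB' < x
  · have h0 := hcl A hA x hxA hsing hmax
    rw [rank_trunc_eq_zero_iff (exists_lt_of_ne_singleton hxA hsing hmax)] at h0
    have hst : Straddles x B := ⟨⟨_, min'_mem B hB', hBx⟩, _, max'_mem B hB', hlt.le⟩
    exact ((min_le_min_iff hA' hB').1 (h0 B hB hst)).lt_of_ne
      (hP.ne_of_mem hA hB hAB (min'_mem A hA') (min'_mem B hB'))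
  · exact (min'_le A x hxA).trans_lt ((not_lt.1 hBx).lt_of_ne
      (hP.ne_of_mem hA hB hAB hxA (min'_mem B hB')))

theorem isMonotonePartition_iff :
    IsMonotonePartition n P ↔ IsSetPartition n P ∧ ClosesAtRank (fun _ => 0) P := by
  refine and_congr_right fun (hP : IsSetPartition n P) =>
    ⟨fun hmono B hB x hxB hsing hmax => ?_, fun hcl => ?_⟩
  · have hlt := exists_lt_of_ne_singleton hxB hsing hmax
    rw [rank_trunc_eq_zero_iff hlt]
    rintro C hC ⟨⟨y, hyC, hy⟩, z, hzC, hz⟩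
    by_contra! hCB
    have hBne : B.Nonempty := ⟨x, hxB⟩
    have hCne : C.Nonempty := ⟨y, hyC⟩
    have hmin : C.min' hCne < B.min' hBne := by
      rw [← not_le, ← min_le_min_iff]; exact not_le.2 hCB
    have hC2 : 2 ≤ #C := one_lt_card.2 ⟨y, hyC, z, hzC, fun h => (h ▸ hy).not_ge hz⟩
    have hB2 : 2 ≤ #B := by
      obtain ⟨y', hy', hy'x⟩ := hlt
      exact one_lt_card.2 ⟨y', hy', x, hxB, hy'x.ne⟩
    have hmax' := (hmono C hC B hB (fun h => (h ▸ hCB).false) hC2 hB2 hCne hBne).1 hmin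
    exact (le_max' C z hzC).not_gt (hmax'.trans_le (max'_le B hBne x hmax) |>.trans_le hz)
  · intro A hA B hB hAB hA2 hB2 hA' hB'
    refine ⟨fun hmin => ?_, min'_lt_min'_of_max'_lt hP hcl hA hB hAB hA2 hA' hB'⟩
    by_contra hmax
    have hne := hP.ne_of_mem hB hA (Ne.symm hAB) (max'_mem B hB') (max'_mem A hA')
    exact (min'_lt_min'_of_max'_lt hP hcl hB hA (Ne.symm hAB) hB2 hB' hA'
      ((not_lt.1 hmax).lt_of_ne hne)).not_gt hmin

theorem isNonOverlappingPartition_iff :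
    IsNonOverlappingPartition n P ↔ IsSetPartition n P ∧ ClosesAtRank (· - 1) P := by
  refine and_congr_right fun (hP : IsSetPartition n P) =>
    ⟨fun hno B hB x hxB hsing hmax => ?_, fun hcl => ?_⟩
  · have hlt := exists_lt_of_ne_singleton hxB hsing hmax
    rw [rank_trunc_eq_card_sub_one_iff hP hB hxB hlt]
    rintro C hC ⟨⟨y, hyC, hy⟩, z, hzC, hz⟩
    by_contra! hBC
    have hBne : B.Nonempty := ⟨x, hxB⟩
    have hCne : C.Nonempty := ⟨y, hyC⟩
    have hBmax : B.max' hBne = x := le_antisymm (max'_le B hBne x hmax) (le_max' B x hxB)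
    have hzx : x < z :=
      (Fin.le_def.2 hz).lt_of_ne (hP.ne_of_mem hB hC (fun h => (h ▸ hBC).false) hxB hzC)
    refine hno B hB C hC hBne hCne ⟨?_, ?_, ?_⟩
    · rw [← not_le, ← min_le_min_iff]; exact not_le.2 hBC
    · exact hBmax ▸ (min'_le C y hyC).trans_lt hy
    · exact hBmax ▸ hzx.trans_le (le_max' C z hzC)
  · rintro A hA B hB hA' hB' ⟨h1, h2, h3⟩
    set x := A.max' hA'
    have hxA : x ∈ A := max'_mem A hA'
    have hmax : ∀ y ∈ A, y ≤ x := fun y hy => le_max' A y hy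
    have hsing : A ≠ {x} := fun h =>
      (h1.trans h2).ne ((eq_singleton_iff_unique_mem.1 h).2 _ (min'_mem A hA'))
    have h := hcl A hA x hxA hsing hmax
    rw [rank_trunc_eq_card_sub_one_iff hP hA hxA (exists_lt_of_ne_singleton hxA hsing hmax)] at h
    have hst : Straddles x B := ⟨⟨_, min'_mem B hB', h2⟩, _, max'_mem B hB', h3.le⟩
    exact ((min_le_min_iff hB' hA').1 (h B hB hst)).not_gt h1

end PartitionScan

/-- The number of monotone set partitions of `[n]` equals the number of
non-overlapping set partitions of `[n]` (the `n`-th Bessel number). -/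
theorem monotone_eq_nonoverlapping (n : ℕ) :
    {P : Finset (Finset (Fin n)) | IsMonotonePartition n P}.ncard =
      {P : Finset (Finset (Fin n)) | IsNonOverlappingPartition n P}.ncard := by
  simp only [PartitionScan.isMonotonePartition_iff, PartitionScan.isNonOverlappingPartition_iff]
  rw [PartitionScan.ncard_closesAtRank fun _ hj => hj,
    PartitionScan.ncard_closesAtRank fun _ hj => Nat.sub_lt hj Nat.one_pos]
end

section
/- A permutation of [n] avoids the pattern (b-ac) if and only if it avoids the pattern (b-a-c). -/
/-- `π` avoids the pattern (b-ac): there are no (0-based) indices `i < j` with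
`j + 1 < n` and `π j < π i < π (j+1)`. -/
def AvoidsBdAC (n : ℕ) (π : Equiv.Perm (Fin n)) : Prop :=
  ∀ (i j : ℕ) (hi : i < n) (hj : j + 1 < n), i < j →
    ¬ (π ⟨j, Nat.lt_of_succ_lt hj⟩ < π ⟨i, hi⟩ ∧
       π ⟨i, hi⟩ < π ⟨j + 1, hj⟩)

/-- `π` avoids the (classical) pattern (b-a-c): there are no indices `i < j < k`
with `π j < π i < π k`. -/
def AvoidsBdAdC (n : ℕ) (π : Equiv.Perm (Fin n)) : Prop :=
  ∀ i j k : Fin n, i < j → j < k → ¬ (π j < π i ∧ π i < π k)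

lemma avoid_aux (n : ℕ) (π : Equiv.Perm (Fin n)) (h : AvoidsBdAC n π) (i : Fin n) :
    ∀ d : ℕ, ∀ j k : Fin n, k.val - j.val ≤ d → i < j → j < k →
      π j < π i → π i < π k → False := by
  intro d
  induction d with
  | zero =>
    intro j k hd hij hjk _ _
    have : (j : ℕ) < k := hjk
    omega
  | succ d ih =>
    intro j k hd hij hjk h1 h2
    by_cases hc : (j : ℕ) + 1 = (k : ℕ)
    · have hj : (j : ℕ) + 1 < n := hc ▸ k.isLt
      apply h i.val j.val i.isLt hj hij
      have e1 : (⟨i.val, i.isLt⟩ : Fin n) = i := rfl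
      have e2 : (⟨j.val, Nat.lt_of_succ_lt hj⟩ : Fin n) = j := rfl
      have e3 : (⟨j.val + 1, hj⟩ : Fin n) = k := Fin.ext hc
      rw [e1, e2, e3]
      exact ⟨h1, h2⟩
    · have hjk' : (j : ℕ) < (k : ℕ) := hjk
      set k' : Fin n := ⟨k.val - 1, Nat.lt_of_le_of_lt (Nat.sub_le _ _) k.isLt⟩ with hk'
      have hik' : (i : ℕ) < (k' : ℕ) := by
        have : (i : ℕ) < j := hij
        simp only [hk']
        omega
      rcases lt_trichotomy (π k') (π i) with hlt | heq | hgt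
      · have hj2 : (k' : ℕ) + 1 < n := by
          have : (k' : ℕ) + 1 = (k : ℕ) := by simp only [hk']; omega
          omega
        apply h i.val k'.val i.isLt hj2 hik'
        have e1 : (⟨i.val, i.isLt⟩ : Fin n) = i := rfl
        have e2 : (⟨k'.val, Nat.lt_of_succ_lt hj2⟩ : Fin n) = k' := rfl
        have e3 : (⟨k'.val + 1, hj2⟩ : Fin n) = k := Fin.ext (by simp only [hk']; omega)
        rw [e1, e2, e3]
        exact ⟨hlt, h2⟩
      · exact absurd (π.injective heq) (by
          intro hh
          have : (k' : ℕ) = (i : ℕ) := congrArg Fin.val hh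
          omega)
      · have hjk'' : j < k' := by
          show (j : ℕ) < (k' : ℕ)
          simp only [hk']
          omega
        exact ih j k' (by simp only [hk']; omega) hij hjk'' h1 hgt

/-- A permutation avoids (b-ac) if and only if it avoids (b-a-c). -/
theorem avoid_bdac_iff_avoid_bdadc (n : ℕ) (π : Equiv.Perm (Fin n)) :
    AvoidsBdAC n π ↔ AvoidsBdAdC n π := by
  constructor
  · intro h i j k hij hjk ⟨h1, h2⟩
    exact avoid_aux n π h i (k.val - j.val) j k le_rfl hij hjk h1 h2
  · intro h i j hi hj hij ⟨h1, h2⟩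
    exact h ⟨i, hi⟩ ⟨j, Nat.lt_of_succ_lt hj⟩ ⟨j + 1, hj⟩ hij (by simp) ⟨h1, h2⟩
end

section
/- For every n ≥ 0, the number of (b-ac)-avoiding permutations of [n] equals the n-th Catalan number C_n = (1/(n+1))·C(2n,n). -/
open Equiv

private lemma lt1 {n k s : ℕ} (hk : k ≤ n) (hs : s < k) : n - k + 1 + s < n + 1 := by omega
private lemma lt2 {n k x : ℕ} (h1 : ¬x < k) (h2 : ¬x = k) (hx : x < n + 1) :
    x - k - 1 < n - k := by omega
private lemma lt3 {n k t : ℕ} (ht : t < n - k) : 1 + t < n + 1 := by omega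
private lemma lt4 {n k : ℕ} (hk : k ≤ n) : k < n + 1 := by omega
private lemma lt5 {n k v : ℕ} (h : ¬v = 0) (h2 : v ≤ n - k) : v - 1 < n - k := by omega
private lemma lt6 {n k t : ℕ} (hk : k ≤ n) (ht : t < n - k) : k + 1 + t < n + 1 := by omega
private lemma lt7 {n k v : ℕ} (hk : k ≤ n) (h2 : ¬v ≤ n - k) (hv : v < n + 1) :
    v - (n - k) - 1 < k := by omega
private lemma lt8 {n k s : ℕ} (hk : k ≤ n) (hs : s < k) : s < n + 1 := by omega

def glueN (n k : ℕ) (hk : k ≤ n) (σ : Equiv.Perm (Fin k)) (τ : Equiv.Perm (Fin (n - k))) :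
    Equiv.Perm (Fin (n + 1)) where
  toFun x :=
    if h : (x : ℕ) < k then ⟨n - k + 1 + (σ ⟨x, h⟩ : ℕ), lt1 hk (σ ⟨x, h⟩).isLt⟩
    else if h2 : (x : ℕ) = k then ⟨0, Nat.succ_pos n⟩
    else ⟨1 + (τ ⟨(x : ℕ) - k - 1, lt2 h h2 x.isLt⟩ : ℕ),
      lt3 (τ ⟨(x : ℕ) - k - 1, lt2 h h2 x.isLt⟩).isLt⟩
  invFun v :=
    if h : (v : ℕ) = 0 then ⟨k, lt4 hk⟩
    else if h2 : (v : ℕ) ≤ n - k then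
      ⟨k + 1 + (τ.symm ⟨(v : ℕ) - 1, lt5 h h2⟩ : ℕ),
        lt6 hk (τ.symm ⟨(v : ℕ) - 1, lt5 h h2⟩).isLt⟩
    else ⟨(σ.symm ⟨(v : ℕ) - (n - k) - 1, lt7 hk h2 v.isLt⟩ : ℕ),
      lt8 hk (σ.symm ⟨(v : ℕ) - (n - k) - 1, lt7 hk h2 v.isLt⟩).isLt⟩
  left_inv := by
    rintro ⟨x, hx⟩
    apply Fin.ext
    dsimp only
    split_ifs with h h2 h3 h4 h5 h6 h7 h8
    · simp only [Fin.val_mk] at h2; omega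
    · simp only [Fin.val_mk] at h3
      have := (σ ⟨x, h⟩).isLt; omega
    · -- σ case
      have hs := (σ ⟨x, h⟩).isLt
      simp only [Fin.val_mk]
      have e : n - k + 1 + (σ ⟨x, h⟩ : ℕ) - (n - k) - 1 = ((σ ⟨x, h⟩ : Fin k) : ℕ) := by omega
      simp only [e, Fin.eta, Equiv.symm_apply_apply]
    · simp only [Fin.val_mk]; omega
    · exact absurd rfl h5
    · exact absurd rfl h5
    · simp only [Fin.val_mk] at h7; omega
    · -- τ case
      simp only [Fin.val_mk]
      have hs : τ.symm ⟨1 + (τ ⟨x - k - 1, lt2 h h4 hx⟩ : ℕ) - 1,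
          by have := (τ ⟨x - k - 1, lt2 h h4 hx⟩).isLt; omega⟩ = ⟨x - k - 1, lt2 h h4 hx⟩ := by
        rw [Equiv.symm_apply_eq]
        apply Fin.ext
        simp only [Fin.val_mk]
        omega
      rw [hs]
      simp only [Fin.val_mk]; omega
    · simp only [Fin.val_mk] at h8
      have := (τ ⟨x - k - 1, lt2 h h4 hx⟩).isLt; omega
  right_inv := by
    rintro ⟨v, hv⟩
    apply Fin.ext
    dsimp only
    split_ifs with h h2 h3 h4 h5 h6 h7 h8
    · exact absurd h2 (lt_irrefl _)
    · simp only [Fin.val_mk]; omega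
    · exact absurd rfl h3
    · exact absurd h5 (by simp only [Fin.val_mk]; omega)
    · exact absurd h6 (by simp only [Fin.val_mk]; omega)
    · -- τ case
      simp only [Fin.val_mk]
      have hs : (⟨k + 1 + (τ.symm ⟨v - 1, lt5 h h4⟩ : ℕ) - k - 1,
          by have := (τ.symm ⟨v - 1, lt5 h h4⟩).isLt; omega⟩ : Fin (n - k)) =
          τ.symm ⟨v - 1, lt5 h h4⟩ := Fin.ext (by simp only [Fin.val_mk]; omega)
      rw [hs, Equiv.apply_symm_apply]
      simp only [Fin.val_mk]; omega
    · -- σ case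
      simp only [Fin.val_mk]
      have hs : (⟨(σ.symm ⟨v - (n - k) - 1, lt7 hk h4 hv⟩ : ℕ),
          by exact (σ.symm ⟨v - (n - k) - 1, lt7 hk h4 hv⟩).isLt⟩ : Fin k) =
          σ.symm ⟨v - (n - k) - 1, lt7 hk h4 hv⟩ := Fin.ext (by simp only [Fin.val_mk])
      rw [hs, Equiv.apply_symm_apply]
      simp only [Fin.val_mk]; omega
    · exact absurd ((σ.symm ⟨v - (n - k) - 1, lt7 hk h4 hv⟩).isLt) h7
    · exact absurd ((σ.symm ⟨v - (n - k) - 1, lt7 hk h4 hv⟩).isLt) h7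

lemma glueN_val_lt {n k : ℕ} (hk : k ≤ n) (σ : Equiv.Perm (Fin k)) (τ : Equiv.Perm (Fin (n - k)))
    {x : ℕ} (hx : x < n + 1) (h : x < k) :
    ((glueN n k hk σ τ) ⟨x, hx⟩ : ℕ) = n - k + 1 + (σ ⟨x, h⟩ : ℕ) := by
  show ((if h : x < k then _ else _ : Fin (n + 1)) : ℕ) = _
  rw [dif_pos h]

lemma glueN_val_eq {n k : ℕ} (hk : k ≤ n) (σ : Equiv.Perm (Fin k)) (τ : Equiv.Perm (Fin (n - k)))
    {x : ℕ} (hx : x < n + 1) (h : x = k) :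
    ((glueN n k hk σ τ) ⟨x, hx⟩ : ℕ) = 0 := by
  show ((if h' : x < k then _ else if h2 : x = k then _ else _ : Fin (n + 1)) : ℕ) = _
  rw [dif_neg (by omega), dif_pos h]

lemma glueN_val_gt {n k : ℕ} (hk : k ≤ n) (σ : Equiv.Perm (Fin k)) (τ : Equiv.Perm (Fin (n - k)))
    {x : ℕ} (hx : x < n + 1) {y : ℕ} (hy : y < n - k) (e : x = k + 1 + y) :
    ((glueN n k hk σ τ) ⟨x, hx⟩ : ℕ) = 1 + (τ ⟨y, hy⟩ : ℕ) := by
  have hc1 : ¬((⟨x, hx⟩ : Fin (n + 1)) : ℕ) < k := by simp only [Fin.val_mk]; omega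
  have hc2 : ¬((⟨x, hx⟩ : Fin (n + 1)) : ℕ) = k := by simp only [Fin.val_mk]; omega
  simp only [glueN, Equiv.coe_fn_mk]
  rw [dif_neg hc1, dif_neg hc2]
  have hA : x - k - 1 < n - k := by omega
  show 1 + (τ ⟨x - k - 1, hA⟩ : ℕ) = 1 + (τ ⟨y, hy⟩ : ℕ)
  rw [show (⟨x - k - 1, hA⟩ : Fin (n - k)) = ⟨y, hy⟩ from
    Fin.ext (by simp only [Fin.val_mk]; omega)]

lemma avoids_glueN_iff {n k : ℕ} (hk : k ≤ n) (σ : Equiv.Perm (Fin k))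
    (τ : Equiv.Perm (Fin (n - k))) :
    AvoidsBdAC (n + 1) (glueN n k hk σ τ) ↔ AvoidsBdAC k σ ∧ AvoidsBdAC (n - k) τ := by
  constructor
  · intro hg
    constructor
    · intro i j hi hj hij h
      obtain ⟨h1, h2⟩ := h
      rw [Fin.lt_def] at h1 h2
      have hi2 : i < n + 1 := by omega
      have hj2 : j + 1 < n + 1 := by omega
      refine hg i j hi2 hj2 hij ⟨?_, ?_⟩
      · rw [Fin.lt_def, glueN_val_lt hk σ τ (Nat.lt_of_succ_lt hj2) (Nat.lt_of_succ_lt hj),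
          glueN_val_lt hk σ τ hi2 hi]
        omega
      · rw [Fin.lt_def, glueN_val_lt hk σ τ hi2 hi, glueN_val_lt hk σ τ hj2 hj]
        omega
    · intro i j hi hj hij h
      obtain ⟨h1, h2⟩ := h
      rw [Fin.lt_def] at h1 h2
      have hi2 : k + 1 + i < n + 1 := by omega
      have hj2 : (k + 1 + j) + 1 < n + 1 := by omega
      refine hg (k + 1 + i) (k + 1 + j) hi2 hj2 (by omega) ⟨?_, ?_⟩
      · rw [Fin.lt_def,
          glueN_val_gt hk σ τ (Nat.lt_of_succ_lt hj2) (Nat.lt_of_succ_lt hj) rfl,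
          glueN_val_gt hk σ τ hi2 hi rfl]
        omega
      · rw [Fin.lt_def, glueN_val_gt hk σ τ hi2 hi rfl,
          glueN_val_gt hk σ τ hj2 hj (by omega)]
        omega
  · rintro ⟨hσ, hτ⟩ i j hi hj hij h
    obtain ⟨h1, h2⟩ := h
    rw [Fin.lt_def] at h1 h2
    by_cases hik : i < k
    · by_cases hjk : j + 1 < k
      · -- σ pattern
        rw [glueN_val_lt hk σ τ (Nat.lt_of_succ_lt hj) (Nat.lt_of_succ_lt hjk),
          glueN_val_lt hk σ τ hi hik] at h1
        rw [glueN_val_lt hk σ τ hi hik, glueN_val_lt hk σ τ hj hjk] at h2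
        exact hσ i j hik hjk hij ⟨by rw [Fin.lt_def]; omega, by rw [Fin.lt_def]; omega⟩
      · by_cases hjk2 : j + 1 = k
        · rw [glueN_val_eq hk σ τ hj hjk2] at h2
          omega
        · by_cases hjq : j = k
          · have h0 : 0 < n - k := by omega
            rw [glueN_val_lt hk σ τ hi hik, glueN_val_gt hk σ τ hj h0 (by omega)] at h2
            have := (τ ⟨0, h0⟩).isLt
            have := (σ ⟨i, hik⟩).isLt
            omega
          · -- j > k
            have hy : j - k < n - k := by omega
            rw [glueN_val_lt hk σ τ hi hik, glueN_val_gt hk σ τ hj hy (by omega)] at h2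
            have := (τ ⟨j - k, hy⟩).isLt
            omega
    · by_cases hik2 : i = k
      · rw [glueN_val_eq hk σ τ hi hik2] at h1
        omega
      · -- τ pattern : k < i < j
        have hii : i - k - 1 < n - k := by omega
        have hjj : (j - k - 1) + 1 < n - k := by omega
        rw [glueN_val_gt hk σ τ (Nat.lt_of_succ_lt hj) (Nat.lt_of_succ_lt hjj) (by omega),
          glueN_val_gt hk σ τ hi hii (by omega)] at h1
        rw [glueN_val_gt hk σ τ hi hii (by omega), glueN_val_gt hk σ τ hj hjj (by omega)] at h2
        exact hτ (i - k - 1) (j - k - 1) hii hjj (by omega)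
          ⟨by rw [Fin.lt_def]; omega, by rw [Fin.lt_def]; omega⟩

lemma exists_decomp {n : ℕ} (π : Equiv.Perm (Fin (n + 1))) (hπ : AvoidsBdAC (n + 1) π) :
    ∃ (k : ℕ) (hk : k ≤ n) (σ : Equiv.Perm (Fin k)) (τ : Equiv.Perm (Fin (n - k))),
      glueN n k hk σ τ = π := by
  set k : ℕ := ((π.symm 0 : Fin (n + 1)) : ℕ) with hkdef
  have hk : k ≤ n := Nat.lt_succ_iff.mp (π.symm 0).isLt
  have hk0 : ∀ (h : k < n + 1), (π ⟨k, h⟩ : ℕ) = 0 := by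
    intro h
    have e : (⟨k, h⟩ : Fin (n + 1)) = π.symm 0 := Fin.ext rfl
    rw [e, Equiv.apply_symm_apply]
    simp
  have hzero : ∀ (x : ℕ) (hx : x < n + 1), (π ⟨x, hx⟩ : ℕ) = 0 → x = k := by
    intro x hx h0
    have h1 : π ⟨x, hx⟩ = 0 := Fin.ext (by simpa using h0)
    have h2 : (⟨x, hx⟩ : Fin (n + 1)) = π.symm 0 := by
      rw [← h1, Equiv.symm_apply_apply]
    exact congrArg Fin.val h2
  have hpos : ∀ (x : ℕ) (hx : x < n + 1), x ≠ k → 0 < (π ⟨x, hx⟩ : ℕ) := by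
    intro x hx hxk
    rcases Nat.eq_zero_or_pos (π ⟨x, hx⟩ : ℕ) with h | h
    · exact absurd (hzero x hx h) hxk
    · exact h
  have hinj : ∀ (a b : ℕ) (ha : a < n + 1) (hb : b < n + 1), a ≠ b →
      (π ⟨a, ha⟩ : ℕ) ≠ (π ⟨b, hb⟩ : ℕ) := by
    intro a b ha hb hab he
    exact hab (congrArg Fin.val (π.injective (Fin.ext he)))
  -- crossing claim
  have hdrop : ∀ (i : ℕ) (hi : i < n + 1), i < k → ∀ (j : ℕ) (hj : j < n + 1), k < j →
      (π ⟨j, hj⟩ : ℕ) < (π ⟨i, hi⟩ : ℕ) := by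
    intro i hi hik
    have main : ∀ j, k + 1 ≤ j → ∀ (hj : j < n + 1), (π ⟨j, hj⟩ : ℕ) < (π ⟨i, hi⟩ : ℕ) := by
      intro j hj1
      induction j, hj1 using Nat.le_induction with
      | base =>
        intro hj
        by_contra hc
        push_neg at hc
        have hlt : (π ⟨i, hi⟩ : ℕ) < (π ⟨k + 1, hj⟩ : ℕ) :=
          lt_of_le_of_ne hc (hinj i (k + 1) hi hj (by omega))
        refine hπ i k hi hj hik ⟨?_, ?_⟩
        · rw [Fin.lt_def, hk0 (Nat.lt_of_succ_lt hj)]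
          exact hpos i hi (by omega)
        · rw [Fin.lt_def]
          exact hlt
      | succ j hj2 ih =>
        intro hj
        have ihj := ih (Nat.lt_of_succ_lt hj)
        by_contra hc
        push_neg at hc
        have hlt : (π ⟨i, hi⟩ : ℕ) < (π ⟨j + 1, hj⟩ : ℕ) :=
          lt_of_le_of_ne hc (hinj i (j + 1) hi hj (by omega))
        refine hπ i j hi hj (by omega) ⟨?_, ?_⟩
        · rw [Fin.lt_def]
          exact ihj
        · rw [Fin.lt_def]
          exact hlt
    intro j hj hkj
    exact main j (by omega) hj
  have pfi : ∀ (i : Fin k), (i : ℕ) < n + 1 := fun i => by have := i.isLt; omega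
  have pfj : ∀ (j : Fin (n - k)), k + 1 + (j : ℕ) < n + 1 := fun j => by have := j.isLt; omega
  -- values left of k are large
  have hbig : ∀ (i : ℕ) (hi : i < n + 1), i < k → n - k + 1 ≤ (π ⟨i, hi⟩ : ℕ) := by
    intro i hi hik
    have hcard := Fintype.card_le_of_injective
      (fun (j : Fin (n - k + 1)) =>
        (⟨(π ⟨k + (j : ℕ), by have := j.isLt; omega⟩ : ℕ), by
          rcases Nat.eq_zero_or_pos (j : ℕ) with h0 | h0
          · have e : (⟨k + (j : ℕ), by have := j.isLt; omega⟩ : Fin (n + 1)) =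
                ⟨k, by omega⟩ := Fin.ext (by simp only [Fin.val_mk]; omega)
            rw [e, hk0 (by omega)]
            exact hpos i hi (by omega)
          · exact hdrop i hi hik (k + (j : ℕ)) (by have := j.isLt; omega) (by omega)⟩ :
          Fin ((π ⟨i, hi⟩ : ℕ))))
      (by
        intro a b hab
        simp only [Fin.mk.injEq] at hab
        have := congrArg Fin.val (π.injective (Fin.ext hab))
        simp only [Fin.val_mk] at this
        exact Fin.ext (by omega))
    simp only [Fintype.card_fin] at hcard
    omega
  -- values right of k are small
  have hsmall : ∀ (j : ℕ) (hj : j < n + 1), k < j →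
      1 ≤ (π ⟨j, hj⟩ : ℕ) ∧ (π ⟨j, hj⟩ : ℕ) ≤ n - k := by
    intro j hj hkj
    refine ⟨hpos j hj (by omega), ?_⟩
    have hcard := Fintype.card_le_of_injective
      (fun (i : Fin k) =>
        (⟨(π ⟨(i : ℕ), pfi i⟩ : ℕ) - (π ⟨j, hj⟩ : ℕ) - 1, by
          have h1 := hdrop (i : ℕ) (pfi i) i.isLt j hj hkj
          have h2 := (π ⟨(i : ℕ), pfi i⟩).isLt
          omega⟩ : Fin (n - (π ⟨j, hj⟩ : ℕ))))
      (by
        intro a b hab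
        simp only [Fin.mk.injEq] at hab
        have h1 := hdrop (a : ℕ) (pfi a) a.isLt j hj hkj
        have h2 := hdrop (b : ℕ) (pfi b) b.isLt j hj hkj
        have h3 : (π ⟨(a : ℕ), pfi a⟩ : ℕ) = (π ⟨(b : ℕ), pfi b⟩ : ℕ) := by omega
        have := congrArg Fin.val (π.injective (Fin.ext h3))
        simp only [Fin.val_mk] at this
        exact Fin.ext this)
    simp only [Fintype.card_fin] at hcard
    have := (π ⟨j, hj⟩).isLt
    omega
  -- build σ
  have hbσ : Function.Bijective (fun (i : Fin k) =>
      (⟨(π ⟨(i : ℕ), pfi i⟩ : ℕ) - (n - k + 1), by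
        have h1 := hbig (i : ℕ) (pfi i) i.isLt
        have h2 := (π ⟨(i : ℕ), pfi i⟩).isLt
        have := i.isLt
        omega⟩ : Fin k)) := by
    rw [← Finite.injective_iff_bijective]
    intro a b hab
    simp only [Fin.mk.injEq] at hab
    have h1 := hbig (a : ℕ) (pfi a) a.isLt
    have h2 := hbig (b : ℕ) (pfi b) b.isLt
    have h3 : (π ⟨(a : ℕ), pfi a⟩ : ℕ) = (π ⟨(b : ℕ), pfi b⟩ : ℕ) := by omega
    have := congrArg Fin.val (π.injective (Fin.ext h3))
    simp only [Fin.val_mk] at this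
    exact Fin.ext this
  have hbτ : Function.Bijective (fun (j : Fin (n - k)) =>
      (⟨(π ⟨k + 1 + (j : ℕ), pfj j⟩ : ℕ) - 1, by
        have h1 := hsmall (k + 1 + (j : ℕ)) (pfj j) (by omega)
        have := j.isLt
        omega⟩ : Fin (n - k))) := by
    rw [← Finite.injective_iff_bijective]
    intro a b hab
    simp only [Fin.mk.injEq] at hab
    have h1 := hsmall (k + 1 + (a : ℕ)) (pfj a) (by omega)
    have h2 := hsmall (k + 1 + (b : ℕ)) (pfj b) (by omega)
    have h3 : (π ⟨k + 1 + (a : ℕ), pfj a⟩ : ℕ) = (π ⟨k + 1 + (b : ℕ), pfj b⟩ : ℕ) := by omega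
    have := congrArg Fin.val (π.injective (Fin.ext h3))
    simp only [Fin.val_mk] at this
    exact Fin.ext (by omega)
  refine ⟨k, hk, Equiv.ofBijective _ hbσ, Equiv.ofBijective _ hbτ, ?_⟩
  apply Equiv.ext
  rintro ⟨x, hx⟩
  apply Fin.ext
  rcases lt_trichotomy x k with hxk | hxk | hxk
  · rw [glueN_val_lt hk _ _ hx hxk, Equiv.ofBijective_apply]
    have e : (⟨((⟨x, hxk⟩ : Fin k) : ℕ), pfi ⟨x, hxk⟩⟩ : Fin (n + 1)) = ⟨x, hx⟩ :=
      Fin.ext (by simp only [Fin.val_mk])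
    simp only [Fin.val_mk, e]
    have := hbig x hx hxk
    omega
  · rw [glueN_val_eq hk _ _ hx hxk]
    have e : (⟨x, hx⟩ : Fin (n + 1)) = ⟨k, by omega⟩ :=
      Fin.ext (by simp only [Fin.val_mk]; omega)
    rw [e, hk0 (by omega)]
  · have hy : x - k - 1 < n - k := by omega
    rw [glueN_val_gt hk _ _ hx hy (by omega), Equiv.ofBijective_apply]
    have e : (⟨k + 1 + ((⟨x - k - 1, hy⟩ : Fin (n - k)) : ℕ), pfj ⟨x - k - 1, hy⟩⟩ :
        Fin (n + 1)) = ⟨x, hx⟩ := Fin.ext (by simp only [Fin.val_mk]; omega)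
    simp only [Fin.val_mk, e]
    have := hsmall x hx hxk
    omega

lemma glueN_k_eq {n k k' : ℕ} (hk : k ≤ n) (hk' : k' ≤ n)
    {σ : Equiv.Perm (Fin k)} {τ : Equiv.Perm (Fin (n - k))}
    {σ' : Equiv.Perm (Fin k')} {τ' : Equiv.Perm (Fin (n - k'))}
    (h : glueN n k hk σ τ = glueN n k' hk' σ' τ') : k = k' := by
  by_contra hne
  rcases Nat.lt_or_ge k k' with hlt | hge
  · have hc := congrArg (fun (g : Equiv.Perm (Fin (n + 1))) => ((g ⟨k, by omega⟩) : ℕ)) h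
    rw [glueN_val_eq hk σ τ (by omega) rfl, glueN_val_lt hk' σ' τ' (by omega) hlt] at hc
    omega
  · have hlt : k' < k := by omega
    have hc := congrArg (fun (g : Equiv.Perm (Fin (n + 1))) => ((g ⟨k', by omega⟩) : ℕ)) h
    rw [glueN_val_lt hk σ τ (by omega) hlt, glueN_val_eq hk' σ' τ' (by omega) rfl] at hc
    omega

lemma glueN_comp_eq {n k : ℕ} (hk hk' : k ≤ n)
    {σ σ' : Equiv.Perm (Fin k)} {τ τ' : Equiv.Perm (Fin (n - k))}
    (h : glueN n k hk σ τ = glueN n k hk' σ' τ') : σ = σ' ∧ τ = τ' := by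
  constructor
  · apply Equiv.ext
    intro i
    have hi := i.isLt
    have hc := congrArg (fun (g : Equiv.Perm (Fin (n + 1))) =>
      ((g ⟨(i : ℕ), by omega⟩) : ℕ)) h
    rw [glueN_val_lt hk σ τ (by omega) i.isLt, glueN_val_lt hk' σ' τ' (by omega) i.isLt] at hc
    apply Fin.ext
    simp only [Fin.eta] at hc
    omega
  · apply Equiv.ext
    intro j
    have hj := j.isLt
    have hc := congrArg (fun (g : Equiv.Perm (Fin (n + 1))) =>
      ((g ⟨k + 1 + (j : ℕ), by omega⟩) : ℕ)) h
    rw [glueN_val_gt hk σ τ (by omega) j.isLt rfl,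
      glueN_val_gt hk' σ' τ' (by omega) j.isLt rfl] at hc
    apply Fin.ext
    simp only [Fin.eta] at hc
    omega

noncomputable def fcount (m : ℕ) : ℕ := Nat.card {π : Equiv.Perm (Fin m) // AvoidsBdAC m π}

lemma fcount_rec (n : ℕ) :
    fcount (n + 1) = ∑ k : Fin (n + 1), fcount (k : ℕ) * fcount (n - (k : ℕ)) := by
  classical
  set F : (Σ k : Fin (n + 1),
      {σ : Equiv.Perm (Fin (k : ℕ)) // AvoidsBdAC (k : ℕ) σ} ×
      {τ : Equiv.Perm (Fin (n - (k : ℕ))) // AvoidsBdAC (n - (k : ℕ)) τ}) →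
      {π : Equiv.Perm (Fin (n + 1)) // AvoidsBdAC (n + 1) π} :=
    fun x => ⟨glueN n (x.1 : ℕ) (Nat.lt_succ_iff.mp x.1.isLt) x.2.1.1 x.2.2.1,
      (avoids_glueN_iff _ _ _).mpr ⟨x.2.1.2, x.2.2.2⟩⟩ with hF
  have hbij : Function.Bijective F := by
    constructor
    · rintro ⟨k, ⟨σ, hσ⟩, ⟨τ, hτ⟩⟩ ⟨k', ⟨σ', hσ'⟩, ⟨τ', hτ'⟩⟩ h
      simp only [hF, Subtype.mk.injEq] at h
      have hkk : (k : ℕ) = (k' : ℕ) := glueN_k_eq _ _ h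
      have hkk2 : k = k' := Fin.ext hkk
      subst hkk2
      obtain ⟨h1, h2⟩ := glueN_comp_eq _ _ h
      subst h1
      subst h2
      rfl
    · rintro ⟨π, hπ⟩
      obtain ⟨k, hk, σ, τ, hg⟩ := exists_decomp π hπ
      have hav := (avoids_glueN_iff hk σ τ).mp (by rw [hg]; exact hπ)
      refine ⟨⟨⟨k, by omega⟩, ⟨σ, hav.1⟩, ⟨τ, hav.2⟩⟩, ?_⟩
      exact Subtype.ext hg
  letI : ∀ m : ℕ, Fintype {π : Equiv.Perm (Fin m) // AvoidsBdAC m π} :=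
    fun m => Fintype.ofFinite _
  have hcard := Nat.card_eq_of_bijective F hbij
  rw [fcount, ← hcard, Nat.card_eq_fintype_card, Fintype.card_sigma]
  apply Finset.sum_congr rfl
  intro k _
  rw [Fintype.card_prod, fcount, fcount, Nat.card_eq_fintype_card, Nat.card_eq_fintype_card]

lemma fcount_zero : fcount 0 = 1 := by
  rw [fcount, Nat.card_congr (Equiv.subtypeUnivEquiv (fun π => by
    intro i j hi hj hij
    exact absurd hi (by omega)))]
  rw [Nat.card_eq_fintype_card]
  simp [Fintype.card_perm]

lemma fcount_eq_catalan (n : ℕ) : fcount n = catalan n := by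
  induction n using Nat.strong_induction_on with
  | _ n ih =>
    match n with
    | 0 => rw [fcount_zero, catalan_zero]
    | m + 1 =>
      rw [fcount_rec, catalan_succ]
      apply Finset.sum_congr rfl
      intro k _
      rw [ih (k : ℕ) (by omega), ih (m - (k : ℕ)) (by omega)]


/-- The number of (b-ac)-avoiding permutations of `[n]` is the `n`-th Catalan
number `C_n = C(2n, n)/(n+1)`. -/
theorem avoid_bdac_eq_catalan (n : ℕ) :
    (n + 1) * {π : Equiv.Perm (Fin n) | AvoidsBdAC n π}.ncard =
      (2 * n).choose n := by
  have h1 : {π : Equiv.Perm (Fin n) | AvoidsBdAC n π}.ncard = fcount n :=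
    (Nat.card_coe_set_eq _).symm
  rw [h1, fcount_eq_catalan, succ_mul_catalan_eq_centralBinom]
  rfl
end

section
/- For every n ≥ 1 and every k with 0 ≤ k ≤ n, we have (2n-k) · #{π : π is a (b-ac)-avoiding permutation of [n] with exactly k left-to-right minima} = k · C(2n-k, n), where C denotes the binomial coefficient. (Equivalently, the number of such permutations with k left-to-right minima is the ballot number (k/(2n-k))·C(2n-k,n).) -/
/-- The number of left-to-right minima of `π`:
indices `i` such that `π i < π j` for all `j < i`. -/
noncomputable def ltrMin (n : ℕ) (π : Equiv.Perm (Fin n)) : ℕ :=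
  {i : Fin n | ∀ j : Fin n, j < i → π i < π j}.ncard

/-!
Deleting the largest entry of a (b-ac)-avoider leaves an avoider, and the largest value can be
inserted into an avoider `σ` exactly at the front or directly after a left-to-right maximum of
`σ` (otherwise it is the `c` of a pattern). Insertion at the front adds a left-to-right minimum
and leaves a single left-to-right maximum; insertion after the `j`-th left-to-right maximum keeps
the minima and leaves `j + 1` maxima. Hence the number of avoiders of `[n]` with `k` left-to-right
minima and more than `i` left-to-right maxima depends only on `t = k + i` and satisfies the ballot
recursion `B(n + 1, t) = B(n, t - 1) + B(n + 1, t + 1)`, whose solution is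
`C(2n - t - 1, n - 1) - C(2n - t - 1, n) = t / (2n - t) · C(2n - t, n)`.
-/

open Equiv Finset

namespace Fin

variable {n : ℕ}

lemma val_succAbove (p : Fin (n + 1)) (i : Fin n) :
    (p.succAbove i : ℕ) = if (i : ℕ) < p then (i : ℕ) else (i + 1 : ℕ) := by
  unfold succAbove
  split_ifs <;> simp_all [lt_def]

lemma val_eq_succAbove_add_one_iff {p : Fin (n + 1)} {j : Fin n} :
    (p : ℕ) = p.succAbove j + 1 ↔ j.succ = p := by
  rw [Fin.ext_iff, val_succAbove, val_succ]
  split_ifs <;> omega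

lemma val_succAbove_of_val_eq_add_one (p : Fin (n + 1)) {j k : Fin n} (h : (k : ℕ) = j + 1) :
    (p.succAbove k : ℕ) = p.succAbove j + 1 ∨ j.succ = p := by
  rw [← val_eq_succAbove_add_one_iff, val_succAbove, val_succAbove]
  split_ifs <;> omega

lemma val_eq_add_one_of_val_succAbove (p : Fin (n + 1)) {j k : Fin n}
    (h : (p.succAbove k : ℕ) = p.succAbove j + 1) : (k : ℕ) = j + 1 := by
  rw [val_succAbove, val_succAbove] at h
  split_ifs at h <;> omega

lemma forall_lt_succAbove_iff (p : Fin (n + 1)) (a : Fin n) {P : Fin (n + 1) → Prop} :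
    (∀ j < p.succAbove a, P j) ↔ (a.castSucc < p ∨ P p) ∧ ∀ b < a, P (p.succAbove b) := by
  constructor
  · intro h
    refine ⟨?_, fun b hb => h _ (succAbove_lt_succAbove_iff.2 hb)⟩
    rw [or_iff_not_imp_left]
    intro hp
    exact h p ((lt_succAbove_iff_le_castSucc p a).2 (not_lt.1 hp))
  · rintro ⟨hp, hb⟩ j hj
    rcases eq_or_ne j p with rfl | hjp
    · exact hp.resolve_left fun h => (succAbove_lt_iff_castSucc_lt j a).2 h |>.not_gt hj
    · obtain ⟨b, rfl⟩ := exists_succAbove_eq hjp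
      exact hb b (succAbove_lt_succAbove_iff.1 hj)

lemma card_eq_card_preimage_succAbove_add (s : Finset (Fin (n + 1))) (p : Fin (n + 1)) :
    #s = #{i | p.succAbove i ∈ s} + if p ∈ s then 1 else 0 := by
  conv_lhs => rw [← filter_univ_mem s]
  simp only [card_filter, sum_univ_succAbove _ p, add_comm]

end Fin

namespace Finset

variable {α : Type*} [LinearOrder α] (s : Finset α)

lemma strictMonoOn_card_filter_le : StrictMonoOn (fun q => #{x ∈ s | x ≤ q}) s := by
  intro a _ b hb hab
  refine card_lt_card ((ssubset_iff_of_subset ?_).2 ⟨b, ?_, ?_⟩)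
  · intro x hx
    simp only [mem_filter] at hx ⊢
    exact ⟨hx.1, hx.2.trans hab.le⟩
  · exact mem_filter.2 ⟨hb, le_rfl⟩
  · simp [hab]

lemma exists_card_filter_le_eq {i : ℕ} (hi : i < #s) : ∃ q ∈ s, #{x ∈ s | x ≤ q} = i + 1 := by
  have hmaps : Set.MapsTo (fun q => #{x ∈ s | x ≤ q}) s (Icc 1 #s) := fun q hq =>
    mem_Icc.2 ⟨card_pos.2 ⟨q, mem_filter.2 ⟨hq, le_rfl⟩⟩, card_filter_le _ _⟩
  exact surjOn_of_injOn_of_card_le _ hmaps (strictMonoOn_card_filter_le s).injOn (by simp)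
    (mem_Icc.2 ⟨by omega, hi⟩)

end Finset

section Sequence

variable {α : Type*} [LinearOrder α] {n : ℕ}

def BdACFree (f : Fin n → α) : Prop :=
  ∀ i j k : Fin n, i < j → (k : ℕ) = j + 1 → ¬ (f j < f i ∧ f i < f k)

instance (f : Fin n → α) : Decidable (BdACFree f) := by
  unfold BdACFree
  infer_instance

def ltrMinima (f : Fin n → α) : Finset (Fin n) := {i | ∀ j < i, f i < f j}

def ltrMaxima (f : Fin n → α) : Finset (Fin n) := {i | ∀ j < i, f j < f i}

lemma mem_ltrMinima {f : Fin n → α} {i : Fin n} : i ∈ ltrMinima f ↔ ∀ j < i, f i < f j := by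
  simp [ltrMinima]

lemma mem_ltrMaxima {f : Fin n → α} {i : Fin n} : i ∈ ltrMaxima f ↔ ∀ j < i, f j < f i := by
  simp [ltrMaxima]

lemma zero_mem_ltrMinima (f : Fin (n + 1) → α) : 0 ∈ ltrMinima f := by
  simp [mem_ltrMinima]

lemma zero_mem_ltrMaxima (f : Fin (n + 1) → α) : 0 ∈ ltrMaxima f := by
  simp [mem_ltrMaxima]

section StrictMono

variable {β : Type*} [LinearOrder β] {e : α → β} (he : StrictMono e) (f : Fin n → α)
include he

lemma StrictMono.bdACFree_comp_iff : BdACFree (e ∘ f) ↔ BdACFree f := by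
  simp [BdACFree, he.lt_iff_lt]

lemma StrictMono.ltrMinima_comp : ltrMinima (e ∘ f) = ltrMinima f := by
  simp [ltrMinima, he.lt_iff_lt]

lemma StrictMono.ltrMaxima_comp : ltrMaxima (e ∘ f) = ltrMaxima f := by
  simp [ltrMaxima, he.lt_iff_lt]

end StrictMono

section InsertMax

variable (p : Fin (n + 1)) {x : α} {g : Fin n → α} (hx : ∀ i, g i < x)
include hx

theorem bdACFree_insertNth_iff :
    BdACFree (Fin.insertNth p x g) ↔
      BdACFree g ∧ ∀ q : Fin n, q.succ = p → ∀ i < q, g i ≤ g q := by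
  set f : Fin (n + 1) → α := Fin.insertNth p x g
  have hf : ∀ i, f (p.succAbove i) = g i :=
    Fin.insertNth_apply_succAbove (α := fun _ => α) p x g
  have hfp : f p = x := Fin.insertNth_apply_same (α := fun _ => α) p x g
  constructor
  · intro hfree
    refine ⟨fun i j k hij hjk ⟨h₁, h₂⟩ => ?_, fun q hq i hiq => not_lt.1 fun h => ?_⟩
    · have hij' := Fin.succAbove_lt_succAbove_iff (p := p) |>.2 hij
      rcases p.val_succAbove_of_val_eq_add_one hjk with hk | hp
      · exact hfree _ _ _ hij' hk (by simpa only [hf] using And.intro h₁ h₂)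
      · exact hfree _ _ p hij' (Fin.val_eq_succAbove_add_one_iff.2 hp)
          (by simpa only [hf, hfp] using And.intro h₁ (hx i))
    · exact hfree _ _ p (Fin.succAbove_lt_succAbove_iff.2 hiq)
        (Fin.val_eq_succAbove_add_one_iff.2 hq) (by simpa only [hf, hfp] using And.intro h (hx i))
  · rintro ⟨hg, hmax⟩ i j k hij hjk ⟨h₁, h₂⟩
    have hle : ∀ y, f y ≤ x := by
      intro y
      rcases eq_or_ne y p with rfl | hy
      · exact hfp.le
      · obtain ⟨b, rfl⟩ := Fin.exists_succAbove_eq hy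
        exact (hf b).trans_le (hx b).le
    obtain ⟨a, rfl⟩ := Fin.exists_succAbove_eq (x := i) (y := p)
      (by rintro rfl; exact (hfp ▸ h₂).not_ge (hle k))
    obtain ⟨b, rfl⟩ := Fin.exists_succAbove_eq (x := j) (y := p)
      (by rintro rfl; exact (hfp ▸ h₁).not_ge (hle _))
    rw [hf, hf] at h₁
    have hab := Fin.succAbove_lt_succAbove_iff.1 hij
    rcases eq_or_ne k p with rfl | hk
    · exact (hmax b (Fin.val_eq_succAbove_add_one_iff.1 hjk) a hab).not_gt h₁
    · obtain ⟨c, rfl⟩ := Fin.exists_succAbove_eq hk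
      rw [hf, hf] at h₂
      exact hg a b c hab (p.val_eq_add_one_of_val_succAbove hjk) ⟨h₁, h₂⟩

theorem card_ltrMinima_insertNth :
    #(ltrMinima (Fin.insertNth p x g)) = #(ltrMinima g) + if p = 0 then 1 else 0 := by
  have hself : p ∈ ltrMinima (Fin.insertNth p x g) ↔ p = 0 := by
    refine ⟨fun h => by_contra fun hp => ?_, by rintro rfl; simp [mem_ltrMinima]⟩
    obtain ⟨b, hb⟩ := Fin.exists_succAbove_eq (x := 0) (y := p) (Ne.symm hp)
    have := mem_ltrMinima.1 h 0 (Fin.pos_iff_ne_zero.2 hp)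
    rw [Fin.insertNth_apply_same, ← hb, Fin.insertNth_apply_succAbove] at this
    exact this.not_gt (hx b)
  rw [Fin.card_eq_card_preimage_succAbove_add _ p]
  congr 2
  · ext a
    simp [mem_ltrMinima, Fin.forall_lt_succAbove_iff, hx]
  · simp [hself]

theorem card_ltrMaxima_insertNth :
    #(ltrMaxima (Fin.insertNth p x g)) = #{i ∈ ltrMaxima g | i.castSucc < p} + 1 := by
  have hself : p ∈ ltrMaxima (Fin.insertNth p x g) := by
    refine mem_ltrMaxima.2 fun j hj => ?_
    obtain ⟨b, rfl⟩ := Fin.exists_succAbove_eq hj.ne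
    simpa using hx b
  rw [Fin.card_eq_card_preimage_succAbove_add _ p, if_pos hself]
  congr 2
  ext a
  simp [mem_ltrMaxima, Fin.forall_lt_succAbove_iff, (hx a).not_gt, and_comm]

end InsertMax

end Sequence

section Perm

variable {n : ℕ}

lemma avoidsBdAC_iff_bdACFree (π : Perm (Fin n)) : AvoidsBdAC n π ↔ BdACFree ⇑π := by
  constructor
  · rintro h i j k hij hjk
    have hj : (j : ℕ) + 1 < n := hjk ▸ k.2
    obtain rfl : k = ⟨j + 1, hj⟩ := Fin.ext hjk
    exact h i j i.2 hj hij
  · intro h i j hi hj hij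
    exact h ⟨i, hi⟩ ⟨j, _⟩ ⟨j + 1, hj⟩ hij rfl

lemma ltrMin_eq_card_ltrMinima (π : Perm (Fin n)) : ltrMin n π = #(ltrMinima ⇑π) := by
  rw [ltrMin, ← Set.ncard_coe_finset]
  congr 1
  ext i
  simp [mem_ltrMinima]

def insMax (σ : Perm (Fin n)) (p : Fin (n + 1)) : Perm (Fin (n + 1)) :=
  (finSuccEquiv' p).trans ((optionCongr σ).trans (finSuccEquiv' (Fin.last n)).symm)

lemma coe_insMax (σ : Perm (Fin n)) (p : Fin (n + 1)) :
    ⇑(insMax σ p) = Fin.insertNth p (Fin.last n) (Fin.castSucc ∘ σ) := by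
  rw [eq_comm, Fin.insertNth_eq_iff]
  refine ⟨?_, funext fun j => ?_⟩
  · simp [insMax, finSuccEquiv'_symm_none]
  · simp [insMax, Fin.removeNth, finSuccEquiv'_symm_some, Fin.succAbove_last]

lemma insMax_injective :
    Function.Injective fun x : Perm (Fin n) × Fin (n + 1) => insMax x.1 x.2 := by
  rintro ⟨σ, p⟩ ⟨τ, q⟩ h
  simp only [DFunLike.ext'_iff, coe_insMax] at h
  obtain rfl : p = q := (insMax τ q).injective <| by
    simp only [coe_insMax, ← h, Fin.insertNth_apply_same]
  have hστ := Fin.insertNth_injective2 h |>.2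
  simp only [Prod.mk.injEq, and_true]
  exact Equiv.ext fun i => Fin.castSucc_injective n (congrFun hστ i)

lemma insMax_bijective :
    Function.Bijective fun x : Perm (Fin n) × Fin (n + 1) => insMax x.1 x.2 := by
  rw [Fintype.bijective_iff_injective_and_card]
  refine ⟨insMax_injective, ?_⟩
  simp [Fintype.card_perm, Nat.factorial_succ, mul_comm]

noncomputable def insMaxEquiv (n : ℕ) : Perm (Fin n) × Fin (n + 1) ≃ Perm (Fin (n + 1)) :=
  Equiv.ofBijective _ insMax_bijective

lemma insMaxEquiv_apply (x : Perm (Fin n) × Fin (n + 1)) : insMaxEquiv n x = insMax x.1 x.2 :=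
  rfl

variable (σ : Perm (Fin n)) (p : Fin (n + 1))

lemma bdACFree_insMax_iff :
    BdACFree ⇑(insMax σ p) ↔ BdACFree ⇑σ ∧ ∀ q : Fin n, q.succ = p → q ∈ ltrMaxima ⇑σ := by
  rw [coe_insMax, bdACFree_insertNth_iff p (g := Fin.castSucc ∘ ⇑σ)
    (fun i => Fin.castSucc_lt_last _),
    Fin.strictMono_castSucc.bdACFree_comp_iff]
  simp only [Function.comp_apply, Fin.castSucc_le_castSucc_iff, mem_ltrMaxima]
  exact and_congr_right' <| forall₂_congr fun q _ =>
    forall₂_congr fun i hi => (σ.injective.ne hi.ne).le_iff_lt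

lemma card_ltrMinima_insMax :
    #(ltrMinima ⇑(insMax σ p)) = #(ltrMinima ⇑σ) + if p = 0 then 1 else 0 := by
  rw [coe_insMax, card_ltrMinima_insertNth p (g := Fin.castSucc ∘ ⇑σ)
    (fun i => Fin.castSucc_lt_last _),
    Fin.strictMono_castSucc.ltrMinima_comp]

lemma card_ltrMaxima_insMax :
    #(ltrMaxima ⇑(insMax σ p)) = #{i ∈ ltrMaxima ⇑σ | i.castSucc < p} + 1 := by
  rw [coe_insMax, card_ltrMaxima_insertNth p (g := Fin.castSucc ∘ ⇑σ)
    (fun i => Fin.castSucc_lt_last _),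
    Fin.strictMono_castSucc.ltrMaxima_comp]

end Perm

section Counting

def avoidersMaxEq (n k m : ℕ) : Finset (Perm (Fin n)) :=
  {π | BdACFree ⇑π ∧ #(ltrMinima ⇑π) = k ∧ #(ltrMaxima ⇑π) = m}

def avoidersMaxGt (n k i : ℕ) : Finset (Perm (Fin n)) :=
  {π | BdACFree ⇑π ∧ #(ltrMinima ⇑π) = k ∧ i < #(ltrMaxima ⇑π)}

variable {n k m i : ℕ}

lemma mem_avoidersMaxEq {π : Perm (Fin n)} :
    π ∈ avoidersMaxEq n k m ↔ BdACFree ⇑π ∧ #(ltrMinima ⇑π) = k ∧ #(ltrMaxima ⇑π) = m := by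
  simp [avoidersMaxEq]

lemma mem_avoidersMaxGt {π : Perm (Fin n)} :
    π ∈ avoidersMaxGt n k i ↔ BdACFree ⇑π ∧ #(ltrMinima ⇑π) = k ∧ i < #(ltrMaxima ⇑π) := by
  simp [avoidersMaxGt]

lemma card_avoidersMaxGt_eq_add :
    #(avoidersMaxGt n k i) = #(avoidersMaxEq n k (i + 1)) + #(avoidersMaxGt n k (i + 1)) := by
  rw [← card_union_of_disjoint]
  · congr 1
    ext π
    simp only [mem_union, mem_avoidersMaxEq, mem_avoidersMaxGt, ← and_or_left]
    exact and_congr_right' <| and_congr_right' <| by omega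
  · simp only [disjoint_left, mem_avoidersMaxEq, mem_avoidersMaxGt]
    rintro π ⟨-, -, h₁⟩ ⟨-, -, h₂⟩
    omega

lemma avoidersMaxGt_eq_empty_of_le (h : n ≤ i) : avoidersMaxGt n k i = ∅ := by
  refine eq_empty_of_forall_notMem fun π hπ => ?_
  have := card_le_univ (ltrMaxima ⇑π)
  simp only [mem_avoidersMaxGt, Fintype.card_fin] at hπ this
  omega

lemma avoidersMaxGt_zero_left : avoidersMaxGt (n + 1) 0 i = ∅ := by
  refine eq_empty_of_forall_notMem fun π hπ => ?_
  simp only [mem_avoidersMaxGt, card_eq_zero] at hπ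
  simpa [hπ.2.1] using zero_mem_ltrMinima ⇑π

lemma card_avoidersMaxGt_one : #(avoidersMaxGt 1 k i) = if k = 1 ∧ i = 0 then 1 else 0 := by
  have huniv : ∀ f : Fin 1 → Fin 1, ltrMinima f = univ ∧ ltrMaxima f = univ := fun f =>
    ⟨eq_univ_of_forall fun i => by simp [mem_ltrMinima, Fin.lt_def],
      eq_univ_of_forall fun i => by simp [mem_ltrMaxima, Fin.lt_def]⟩
  have hfree : ∀ f : Fin 1 → Fin 1, BdACFree f := fun f i j k hij => by omega
  simp only [avoidersMaxGt, hfree, huniv, card_univ, Fintype.card_fin, true_and]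
  split_ifs with h
  · simp_all
  · simp [eq_comm, h]

lemma insMax_zero_mem_avoidersMaxEq_iff (σ : Perm (Fin n)) :
    insMax σ 0 ∈ avoidersMaxEq (n + 1) k m ↔
      BdACFree ⇑σ ∧ #(ltrMinima ⇑σ) + 1 = k ∧ m = 1 := by
  simp [mem_avoidersMaxEq, bdACFree_insMax_iff, card_ltrMinima_insMax, card_ltrMaxima_insMax,
    Fin.succ_ne_zero, eq_comm]

lemma insMax_succ_mem_avoidersMaxEq_iff (σ : Perm (Fin n)) (q : Fin n) :
    insMax σ q.succ ∈ avoidersMaxEq (n + 1) k m ↔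
      BdACFree ⇑σ ∧ q ∈ ltrMaxima ⇑σ ∧ #(ltrMinima ⇑σ) = k ∧
        #{i ∈ ltrMaxima ⇑σ | i ≤ q} + 1 = m := by
  simp [mem_avoidersMaxEq, bdACFree_insMax_iff, card_ltrMinima_insMax, card_ltrMaxima_insMax,
    Fin.succ_ne_zero, and_assoc]

lemma card_avoidersMaxEq_succ_one :
    #(avoidersMaxEq (n + 2) (k + 1) 1) = #(avoidersMaxGt (n + 1) k 0) := by
  symm
  refine card_nbij (fun σ => insMax σ 0) (fun σ hσ => ?_) (fun σ _ τ _ h => ?_) (fun π hπ => ?_)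
  · rw [mem_coe, mem_avoidersMaxGt] at hσ
    exact insMax_zero_mem_avoidersMaxEq_iff σ |>.2 ⟨hσ.1, by rw [hσ.2.1], rfl⟩
  · exact congrArg Prod.fst ((insMaxEquiv _).injective (a₁ := (σ, 0)) (a₂ := (τ, 0)) h)
  · obtain ⟨⟨σ, p⟩, rfl⟩ := (insMaxEquiv _).surjective π
    rw [mem_coe, insMaxEquiv_apply] at hπ
    obtain rfl : p = 0 := by
      by_contra hp
      have hmax := (mem_avoidersMaxEq.1 hπ).2.2
      rw [card_ltrMaxima_insMax, add_eq_right, card_eq_zero, filter_eq_empty_iff] at hmax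
      exact hmax (zero_mem_ltrMaxima _) (Fin.pos_iff_ne_zero.2 hp)
    obtain ⟨hfree, hmin, -⟩ := (insMax_zero_mem_avoidersMaxEq_iff σ).1 hπ
    exact ⟨σ, mem_avoidersMaxGt.2 ⟨hfree, by omega, card_pos.2 ⟨0, zero_mem_ltrMaxima _⟩⟩, rfl⟩

lemma card_avoidersMaxEq_succ_add_two :
    #(avoidersMaxEq (n + 1) k (i + 2)) = #(avoidersMaxGt n k i) := by
  have hsucc : ∀ σ p, insMax σ p ∈ avoidersMaxEq (n + 1) k (i + 2) → ∃ q : Fin n, p = q.succ ∧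
      BdACFree ⇑σ ∧ q ∈ ltrMaxima ⇑σ ∧ #(ltrMinima ⇑σ) = k ∧
        #{x ∈ ltrMaxima ⇑σ | x ≤ q} = i + 1 := by
    intro σ p h
    rcases Fin.eq_zero_or_eq_succ p with rfl | ⟨q, rfl⟩
    · simp [insMax_zero_mem_avoidersMaxEq_iff] at h
    · obtain ⟨h₁, h₂, h₃, h₄⟩ := (insMax_succ_mem_avoidersMaxEq_iff σ q).1 h
      exact ⟨q, rfl, h₁, h₂, h₃, by omega⟩
  refine card_nbij (fun π => ((insMaxEquiv n).symm π).1) (fun π hπ => ?_)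
    (fun π₁ hπ₁ π₂ hπ₂ h => ?_) (fun σ hσ => ?_)
  · obtain ⟨⟨σ, p⟩, rfl⟩ := (insMaxEquiv _).surjective π
    obtain ⟨q, -, hfree, -, hmin, hrank⟩ := hsucc σ p hπ
    simp only [mem_coe, Equiv.symm_apply_apply]
    refine mem_avoidersMaxGt.2 ⟨hfree, hmin, ?_⟩
    have := card_filter_le (ltrMaxima ⇑σ) (· ≤ q)
    omega
  · obtain ⟨⟨σ, p₁⟩, rfl⟩ := (insMaxEquiv _).surjective π₁
    obtain ⟨⟨τ, p₂⟩, rfl⟩ := (insMaxEquiv _).surjective π₂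
    obtain rfl : σ = τ := by simpa only [Equiv.symm_apply_apply] using h
    obtain ⟨q₁, rfl, -, hq₁, -, hrank₁⟩ := hsucc σ p₁ hπ₁
    obtain ⟨q₂, rfl, -, hq₂, -, hrank₂⟩ := hsucc σ p₂ hπ₂
    obtain rfl : q₁ = q₂ :=
      (strictMonoOn_card_filter_le _).injOn hq₁ hq₂ (hrank₁.trans hrank₂.symm)
    rfl
  · obtain ⟨hfree, hmin, hmax⟩ := mem_avoidersMaxGt.1 hσ
    obtain ⟨q, hq, hrank⟩ := exists_card_filter_le_eq _ hmax
    refine ⟨insMax σ q.succ, (insMax_succ_mem_avoidersMaxEq_iff σ q).2 ⟨hfree, hq, hmin, ?_⟩,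
      congrArg Prod.fst ((insMaxEquiv n).symm_apply_apply (σ, q.succ))⟩
    rw [hrank]

end Counting

/-- The guard `t ≤ n` is needed because `2 * n - t - 1` truncates: without it, `ballot 1 2`
would be `1`. -/
def ballot (n t : ℕ) : ℤ :=
  if t ≤ n then ((2 * n - t - 1).choose (n - 1) : ℤ) - (2 * n - t - 1).choose n else 0

lemma ballot_zero_right (n : ℕ) : ballot n 0 = 0 := by
  rcases n with _ | n
  · simp [ballot]
  · have h : 2 * (n + 1) - 0 - 1 = 2 * n + 1 := by omega
    rw [ballot, if_pos (Nat.zero_le _), h, Nat.add_sub_cancel, Nat.choose_symm_half, sub_self]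

lemma ballot_of_lt {n t : ℕ} (h : n < t) : ballot n t = 0 := by
  simp [ballot, h.not_ge]

lemma ballot_succ {n t : ℕ} (hn : 0 < n) (ht : 0 < t) :
    ballot (n + 1) t = ballot n (t - 1) + ballot (n + 1) (t + 1) := by
  obtain ⟨m, rfl⟩ : ∃ m, n = m + 1 := ⟨n - 1, by omega⟩
  rcases lt_trichotomy t (m + 2) with h | rfl | h
  · obtain ⟨N, hN⟩ : ∃ N, 2 * (m + 1) - t = N := ⟨_, rfl⟩
    have e₁ : 2 * (m + 1 + 1) - t - 1 = N + 1 := by omega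
    have e₂ : 2 * (m + 1) - (t - 1) - 1 = N := by omega
    have e₃ : 2 * (m + 1 + 1) - (t + 1) - 1 = N := by omega
    simp only [ballot, if_pos (by omega : t ≤ m + 1 + 1), if_pos (by omega : t - 1 ≤ m + 1),
      if_pos (by omega : t + 1 ≤ m + 1 + 1), e₁, e₂, e₃, Nat.add_sub_cancel,
      Nat.choose_succ_succ' N]
    push_cast
    ring
  · have e₁ : 2 * (m + 1 + 1) - (m + 2) - 1 = m + 1 := by omega
    have e₂ : 2 * (m + 1) - (m + 1) - 1 = m := by omega
    simp [ballot, e₁, e₂]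
  · rw [ballot_of_lt h, ballot_of_lt (by omega), ballot_of_lt (by omega), add_zero]

lemma ballot_mul {n k : ℕ} (hk : k ≤ n) :
    ((2 * n - k : ℕ) : ℤ) * ballot n k = k * (2 * n - k).choose n := by
  rcases n with _ | n
  · obtain rfl : k = 0 := by omega
    simp
  obtain ⟨m, hm⟩ : ∃ m, 2 * (n + 1) - k = m + 1 := ⟨2 * (n + 1) - k - 1, by omega⟩
  have h₁ := Nat.add_one_mul_choose_eq m n
  have h₂ := Nat.choose_mul_succ_eq m (n + 1)
  rw [ballot, if_pos hk, hm, Nat.add_sub_cancel, Nat.add_sub_cancel]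
  rw [show m + 1 - (n + 1) = n + 1 - k by omega] at h₂
  zify [hk] at h₁ h₂
  push_cast
  linear_combination h₁ - h₂

theorem card_avoidersMaxGt (n : ℕ) {k : ℕ} (hk : 0 < k) (i : ℕ) :
    (#(avoidersMaxGt (n + 1) k i) : ℤ) = ballot (n + 1) (k + i) := by
  induction n generalizing k i with
  | zero =>
    rw [card_avoidersMaxGt_one]
    rcases Nat.lt_or_ge 1 (k + i) with h | h
    · rw [ballot_of_lt h, if_neg (by omega), Nat.cast_zero]
    · obtain ⟨rfl, rfl⟩ : k = 1 ∧ i = 0 := by omega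
      simp [ballot]
  | succ n ih =>
    have hEq : ∀ i, (#(avoidersMaxEq (n + 2) k (i + 1)) : ℤ) = ballot (n + 1) (k + i - 1) := by
      rintro (_ | i)
      · obtain ⟨k, rfl⟩ := Nat.exists_eq_add_of_lt hk
        rw [zero_add, card_avoidersMaxEq_succ_one]
        rcases k.eq_zero_or_pos with rfl | hk'
        · simp [avoidersMaxGt_zero_left, ballot_zero_right]
        · simpa using ih hk' 0
      · rw [card_avoidersMaxEq_succ_add_two, ih hk]
        congr 1
    induction hd : n + 2 - i generalizing i with
    | zero =>
      rw [avoidersMaxGt_eq_empty_of_le (by omega), ballot_of_lt (by omega), card_empty,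
        Nat.cast_zero]
    | succ d ihd =>
      rw [card_avoidersMaxGt_eq_add, Nat.cast_add, hEq, ihd (i + 1) (by omega),
        ballot_succ (n := n + 1) (t := k + i) (by omega) (by omega)]
      rfl

/-- The number of (b-ac)-avoiding permutations of `[n]` with exactly `k`
left-to-right minima is the ballot number `(k/(2n-k))·C(2n-k, n)`. -/
theorem avoid_bdac_ltrmin_eq_ballot (n k : ℕ) (hn : 1 ≤ n) (hk : k ≤ n) :
    (2 * n - k) *
        {π : Equiv.Perm (Fin n) | AvoidsBdAC n π ∧ ltrMin n π = k}.ncard =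
      k * (2 * n - k).choose n := by
  obtain ⟨n, rfl⟩ := Nat.exists_eq_add_of_le' hn
  have hset : {π : Perm (Fin (n + 1)) | AvoidsBdAC (n + 1) π ∧ ltrMin (n + 1) π = k} =
      avoidersMaxGt (n + 1) k 0 := by
    ext π
    simp [mem_avoidersMaxGt, avoidsBdAC_iff_bdACFree, ltrMin_eq_card_ltrMinima,
      card_pos.2 ⟨0, zero_mem_ltrMaxima ⇑π⟩]
  have hcount : (#(avoidersMaxGt (n + 1) k 0) : ℤ) = ballot (n + 1) k := by
    rcases k.eq_zero_or_pos with rfl | hk₀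
    · simp [avoidersMaxGt_zero_left, ballot_zero_right]
    · exact card_avoidersMaxGt n hk₀ 0
  rw [hset, Set.ncard_coe_finset]
  exact_mod_cast hcount ▸ ballot_mul hk
end
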